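/- arXiv:2007.03826 — 7 statements merged into one kernel-verified Lean document; each statement's English description precedes it below -/
import Mathlib

section
/- Let Γ be a finite directed multigraph with vertex set {v_1, …, v_n} and a weight function w from its edge set to the integers, and let L be its n×n Laplacian matrix. For any fixed index r, let L_r denote the matrix obtained from L by deleting the r-th row and r-th column. Then det(L_r) equals N(Γ, w, v_r), the weighted number of oriented spanning trees of Γ rooted at v_r. -/
/-- A finite directed multigraph on vertex type `V` with edge type `E`. -/
structure Multidigraph (V E : Type) where
  src : E → V
  tgt : E → V

/-- `T` is an oriented spanning tree of `G` rooted at `r`: every vertex `v ≠ r`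
has in-degree 1 in `T`, the root `r` has in-degree 0 in `T`, and `T` contains
no oriented cycle. -/
def IsOrientedSpanningTree {V E : Type} [Fintype E] [DecidableEq V]
    (G : Multidigraph V E) (r : V) (T : Finset E) : Prop :=
  (∀ v : V, v ≠ r → (T.filter (fun e => G.tgt e = v)).card = 1) ∧
  (T.filter (fun e => G.tgt e = r)).card = 0 ∧
  ¬ ∃ l : List E, l ≠ [] ∧ (∀ e ∈ l, e ∈ T) ∧
      l.Chain' (fun e f => G.tgt e = G.src f) ∧
      ∀ e₁ ∈ l.head?, ∀ e₂ ∈ l.getLast?, G.tgt e₂ = G.src e₁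

open Classical in
/-- The weighted number `N(Γ, w, r)` of oriented spanning trees rooted at `r`. -/
noncomputable def treeCount {V E : Type} [Fintype E] [DecidableEq V]
    (G : Multidigraph V E) (w : E → ℤ) (r : V) : ℤ :=
  ∑ T : Finset E, if IsOrientedSpanningTree G r T then ∏ e ∈ T, w e else 0

/-!
Column `j` of the reduced Laplacian is `∑ w e • (χ (tgt e) - χ (src e))` over the edges `e` into
`v_j`, with `χ` restricted to the non-root vertices. Expanding the determinant multilinearly
gives a sum over the choices `f` of one in-edge per non-root vertex, with coefficient
`∏ j, w (f j)` and determinant `det (1 - P)`, where `P` is the matrix of the partial "parent" map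
`j ↦ src (f j)` (undefined at the root). That determinant is `1` when following parents always
reaches the root and `0` when the parent map has a cycle, and the choices of the first kind are
exactly the oriented spanning trees rooted at `r`.
-/

open Finset Matrix Relation

namespace Matrix

variable {ι R : Type*} [Fintype ι] [DecidableEq ι] [CommRing R]

theorem det_of_sum_smul {κ : Type*} (s : ι → Finset κ) (c : ι → κ → R) (v : κ → ι → R) :
    (of fun j => ∑ e ∈ s j, c j e • v e).det
      = ∑ f ∈ Fintype.piFinset s, (∏ j, c j (f j)) * (of fun j => v (f j)).det := by
  change detRowAlternating.toMultilinearMap (fun j => ∑ e ∈ s j, c j e • v e) = _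
  rw [MultilinearMap.map_sum_finset]
  refine sum_congr rfl fun f _ => ?_
  rw [MultilinearMap.map_smul_univ, smul_eq_mul]
  rfl

def parentMatrix (R : Type*) [Zero R] [One R] (p : ι → Option ι) : Matrix ι ι R :=
  of fun j i => if p j = some i then 1 else 0

theorem parentMatrix_mulVec (p : ι → Option ι) (v : ι → R) (j : ι) :
    (parentMatrix R p *ᵥ v) j = (p j).elim 0 v := by
  rcases hpj : p j with _ | i <;> simp [parentMatrix, mulVec, dotProduct, hpj]

/- Ordered by decreasing rank of the parent relation, `1 - parentMatrix R p` is block triangular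
with identity diagonal blocks. -/
theorem det_one_sub_parentMatrix_of_wellFounded {p : ι → Option ι}
    (hp : WellFounded fun i j => p j = some i) : (1 - parentMatrix R p).det = 1 := by
  have := IsWellFounded.mk hp
  set rank := IsWellFounded.rank fun i j => p j = some i
  have hrank {i j} (h : p j = some i) : rank i < rank j := IsWellFounded.rank_lt_of_rel h
  have hM : (1 - parentMatrix R p).BlockTriangular (OrderDual.toDual ∘ rank) := by
    intro j i hij
    have hji : j ≠ i := fun h => (h ▸ hij).false
    have : p j ≠ some i := fun h => (hrank h).asymm hij
    simp [parentMatrix, one_apply_ne hji, this]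
  rw [hM.det]
  refine prod_eq_one fun a _ => ?_
  suffices (1 - parentMatrix R p).toSquareBlock (OrderDual.toDual ∘ rank) a = 1 by
    rw [this, det_one]
  ext ⟨j, hj⟩ ⟨i, hi⟩
  have : p j ≠ some i := fun h => (hrank h).ne (congrArg OrderDual.ofDual (hi.trans hj.symm))
  simp [parentMatrix, toSquareBlock_def, one_apply, this]

/- The indicator of the non-accessible indices is a nonzero kernel vector: an index is accessible
iff its parent (if any) is. -/
theorem det_one_sub_parentMatrix_of_not_wellFounded [IsDomain R] {p : ι → Option ι}
    (hp : ¬ WellFounded fun i j => p j = some i) : (1 - parentMatrix R p).det = 0 := by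
  set r : ι → ι → Prop := fun i j => p j = some i
  obtain ⟨j₀, hj₀⟩ : ∃ j, ¬ Acc r j := by
    by_contra! h
    exact hp ⟨h⟩
  have hacc (j : ι) : Acc r j ↔ ∀ i, p j = some i → Acc r i :=
    ⟨fun h _ hi => h.inv hi, Acc.intro (r := r) j⟩
  classical
  refine exists_mulVec_eq_zero_iff.mp ⟨fun i => if Acc r i then 0 else 1, ?_, ?_⟩
  · exact fun h => by simpa [hj₀] using congrFun h j₀
  · ext j
    rw [sub_mulVec, one_mulVec, Pi.sub_apply, parentMatrix_mulVec]
    rcases hpj : p j with _ | i <;> simp [hpj, hacc j]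

theorem det_one_sub_parentMatrix [IsDomain R] (p : ι → Option ι)
    [Decidable (WellFounded fun i j => p j = some i)] :
    (1 - parentMatrix R p).det = if WellFounded fun i j => p j = some i then 1 else 0 := by
  split_ifs with hp
  exacts [det_one_sub_parentMatrix_of_wellFounded hp,
    det_one_sub_parentMatrix_of_not_wellFounded hp]

end Matrix

namespace List

variable {α β : Type*}

def IsCyclicChain (r : α → α → Prop) (l : List α) : Prop :=
  l ≠ [] ∧ l.IsChain r ∧ ∀ a ∈ l.head?, ∀ b ∈ l.getLast?, r b a

theorem isCyclicChain_map {r : α → α → Prop} (f : β → α) {l : List β} :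
    (l.map f).IsCyclicChain r ↔ l.IsCyclicChain fun x y => r (f x) (f y) := by
  simp [IsCyclicChain, isChain_map, head?_map, getLast?_map]

theorem exists_isCyclicChain_iff_not_wellFounded [Finite α] (r : α → α → Prop) :
    (∃ l : List α, l.IsCyclicChain r) ↔ ¬ WellFounded r := by
  constructor
  · rintro ⟨_ | ⟨a, l⟩, hne, hl, hba⟩ hwf
    · exact hne rfl
    have hab := relationReflTransGen_of_exists_isChain_cons l hl rfl
    have hcycle := TransGen.tail' hab (hba a rfl _ (getLast?_eq_some_getLast (cons_ne_nil a l)))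
    exact hwf.transGen.irrefl.irrefl a hcycle
  · intro hwf
    obtain ⟨a, hcycle⟩ : ∃ a, TransGen r a a := by
      by_contra! h
      have : Std.Irrefl (TransGen r) := ⟨h⟩
      exact hwf (Subrelation.wf TransGen.single (Finite.wellFounded_of_trans_of_irrefl _))
    obtain ⟨b, hab, hba⟩ := TransGen.head'_iff.mp hcycle
    obtain ⟨l, hl, hlast⟩ := exists_isChain_cons_of_relationReflTransGen hba
    refine ⟨b :: l, cons_ne_nil b l, hl, ?_⟩
    intro b' hb' c hc
    rw [head?_cons, Option.mem_some_iff] at hb'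
    rw [getLast?_eq_some_getLast (cons_ne_nil b l), hlast, Option.mem_some_iff] at hc
    rwa [← hb', ← hc]

end List

namespace Multidigraph

def incidence {V E : Type} [DecidableEq V] (G : Multidigraph V E) (e : E) (u : V) : ℤ :=
  (if G.tgt e = u then 1 else 0) - (if G.src e = u then 1 else 0)

/- Loops may be kept in the sum: their incidence vector vanishes. -/
theorem laplacian_eq_sum_incidence {V E : Type} [Fintype V] [DecidableEq V] [Fintype E]
    (G : Multidigraph V E) (w : E → ℤ) (a : V → V → ℤ) (ha_diag : ∀ i, a i i = 0)
    (ha_off : ∀ i j, i ≠ j →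
      a i j = ∑ e ∈ Finset.univ.filter (fun e => G.src e = i ∧ G.tgt e = j), w e)
    (L : Matrix V V ℤ) (hL_off : ∀ i j, i ≠ j → L i j = -a i j)
    (hL_diag : ∀ j, L j j = ∑ k, a k j) (u v : V) :
    L u v = ∑ e ∈ univ.filter (fun e => G.tgt e = v), w e * G.incidence e u := by
  have ha (i j : V) : a i j = ∑ e, if G.src e = i ∧ G.tgt e = j ∧ i ≠ j then w e else 0 := by
    rcases eq_or_ne i j with rfl | hij
    · simp [ha_diag]
    · simp [ha_off i j hij, sum_filter, hij]
  rw [sum_filter]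
  rcases eq_or_ne u v with rfl | huv
  · rw [hL_diag, sum_congr rfl fun k _ => ha k u, sum_comm]
    refine sum_congr rfl fun e _ => ?_
    by_cases ht : G.tgt e = u <;> by_cases hs : G.src e = u <;> simp [incidence, ite_and, ht, hs]
  · rw [hL_off u v huv, ha, ← sum_neg_distrib]
    refine sum_congr rfl fun e _ => ?_
    by_cases ht : G.tgt e = v <;> by_cases hs : G.src e = u <;>
      simp [incidence, ht, hs, huv, huv.symm]

variable {n : ℕ} {E : Type} (G : Multidigraph (Fin (n + 1)) E) (r : Fin (n + 1))

/- Non-root vertices are indexed by `Fin n` via `r.succAbove`; an edge leaving the root has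
parent `none`. -/
def parent (f : Fin n → E) (j : Fin n) : Option (Fin n) :=
  finSuccEquiv' r (G.src (f j))

theorem parent_eq_some_iff {f : Fin n → E} {i j : Fin n} :
    G.parent r f j = some i ↔ G.src (f j) = r.succAbove i := by
  rw [parent, ← finSuccEquiv'_succAbove r i, Equiv.apply_eq_iff_eq]

variable [Fintype E]

def inEdgeChoices : Finset (Fin n → E) :=
  Fintype.piFinset fun j => univ.filter fun e => G.tgt e = r.succAbove j

variable {G r}

theorem mem_inEdgeChoices {f : Fin n → E} :
    f ∈ G.inEdgeChoices r ↔ ∀ j, G.tgt (f j) = r.succAbove j := by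
  simp [inEdgeChoices]

theorem injective_of_mem_inEdgeChoices {f : Fin n → E} (hf : f ∈ G.inEdgeChoices r) :
    Function.Injective f := by
  intro i j hij
  rw [mem_inEdgeChoices] at hf
  exact Fin.succAbove_right_injective ((hf i).symm.trans (hij ▸ hf j))

theorem of_incidence_succAbove_eq_one_sub_parentMatrix {f : Fin n → E} (hf : f ∈ G.inEdgeChoices r) :
    (of fun j i => G.incidence (f j) (r.succAbove i)) = 1 - parentMatrix ℤ (G.parent r f) := by
  ext j i
  rw [mem_inEdgeChoices] at hf
  simp [incidence, parentMatrix, one_apply, hf j, parent_eq_some_iff, eq_comm]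

theorem det_laplacian_submatrix (w : E → ℤ) (a : Fin (n + 1) → Fin (n + 1) → ℤ)
    (ha_diag : ∀ i, a i i = 0)
    (ha_off : ∀ i j, i ≠ j →
      a i j = ∑ e ∈ Finset.univ.filter (fun e => G.src e = i ∧ G.tgt e = j), w e)
    (L : Matrix (Fin (n + 1)) (Fin (n + 1)) ℤ) (hL_off : ∀ i j, i ≠ j → L i j = -a i j)
    (hL_diag : ∀ j, L j j = ∑ k, a k j)
    [DecidablePred fun f => WellFounded fun i j => G.parent r f j = some i] :
    (L.submatrix r.succAbove r.succAbove).det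
      = ∑ f ∈ (G.inEdgeChoices r).filter (fun f => WellFounded fun i j => G.parent r f j = some i),
          ∏ j, w (f j) := by
  have hL : (L.submatrix r.succAbove r.succAbove)ᵀ
      = of fun j => ∑ e ∈ univ.filter (fun e => G.tgt e = r.succAbove j),
          w e • fun i => G.incidence e (r.succAbove i) := by
    ext j i
    simp [laplacian_eq_sum_incidence G w a ha_diag ha_off L hL_off hL_diag, Finset.sum_apply]
  rw [← det_transpose, hL, det_of_sum_smul, sum_filter]
  refine sum_congr rfl fun f hf => ?_
  rw [of_incidence_succAbove_eq_one_sub_parentMatrix hf, det_one_sub_parentMatrix, mul_ite, mul_one, mul_zero]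

/- An edge of `univ.image f` is `f i` for a unique `i`, and `f i` is followed by `f j` in a path
exactly when `i` is the parent of `j`. -/
theorem isOrientedSpanningTree_image_iff [DecidableEq E] {f : Fin n → E}
    (hf : f ∈ G.inEdgeChoices r) :
    IsOrientedSpanningTree G r (univ.image f) ↔
      WellFounded fun i j => G.parent r f j = some i := by
  rw [mem_inEdgeChoices] at hf
  have hfiber (j : Fin n) :
      (univ.image f).filter (fun e => G.tgt e = r.succAbove j) = {f j} := by
    ext e
    simp only [mem_filter, mem_image, mem_univ, true_and, mem_singleton]
    constructor
    · rintro ⟨⟨k, rfl⟩, hk⟩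
      rw [Fin.succAbove_right_injective ((hf k).symm.trans hk)]
    · rintro rfl
      exact ⟨⟨j, rfl⟩, hf j⟩
  have hdeg : ∀ v, v ≠ r → ((univ.image f).filter fun e => G.tgt e = v).card = 1 := by
    intro v hv
    obtain ⟨j, rfl⟩ := Fin.exists_succAbove_eq hv
    rw [hfiber, card_singleton]
  have hroot : ((univ.image f).filter fun e => G.tgt e = r).card = 0 := by
    simp [filter_eq_empty_iff, hf, Fin.succAbove_ne]
  have hrel (i j : Fin n) : G.tgt (f i) = G.src (f j) ↔ G.parent r f j = some i := by
    rw [hf, parent_eq_some_iff, eq_comm]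
  have hcycle : (∃ l : List E, l ≠ [] ∧ (∀ e ∈ l, e ∈ univ.image f) ∧
      l.IsChain (fun e e' => G.tgt e = G.src e') ∧
      ∀ e₁ ∈ l.head?, ∀ e₂ ∈ l.getLast?, G.tgt e₂ = G.src e₁) ↔
      ¬ WellFounded fun i j => G.parent r f j = some i := by
    calc _ ↔ ∃ l ∈ Set.range (List.map f), l.IsCyclicChain fun e e' => G.tgt e = G.src e' := by
          simp only [Set.range_list_map, Set.mem_ofPred_eq, List.IsCyclicChain,
            mem_image_univ_iff_mem_range]
          exact exists_congr fun _ => by tauto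
      _ ↔ ∃ l : List (Fin n), l.IsCyclicChain fun i j => G.parent r f j = some i := by
          simp only [Set.exists_range_iff, List.isCyclicChain_map, hrel]
      _ ↔ _ := List.exists_isCyclicChain_iff_not_wellFounded _
  exact ⟨fun hT => not_not.mp fun hwf => hT.2.2 (hcycle.mpr hwf),
    fun hwf => ⟨hdeg, hroot, fun hl => hcycle.mp hl hwf⟩⟩

theorem exists_image_eq_of_isOrientedSpanningTree [DecidableEq E] {T : Finset E}
    (hT : IsOrientedSpanningTree G r T) : ∃ f ∈ G.inEdgeChoices r, univ.image f = T := by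
  choose f hf using fun j => card_eq_one.mp (hT.1 _ (Fin.succAbove_ne r j))
  have hmem (j : Fin n) : f j ∈ T.filter fun e => G.tgt e = r.succAbove j := by
    rw [hf]
    exact mem_singleton_self _
  refine ⟨f, mem_inEdgeChoices.mpr fun j => (mem_filter.mp (hmem j)).2, ?_⟩
  ext e
  simp only [mem_image, mem_univ, true_and]
  constructor
  · rintro ⟨j, rfl⟩
    exact (mem_filter.mp (hmem j)).1
  · intro he
    have hne : G.tgt e ≠ r := fun h => by
      have : e ∈ T.filter fun e => G.tgt e = r := mem_filter.mpr ⟨he, h⟩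
      simp [card_eq_zero.mp hT.2.1] at this
    obtain ⟨j, hj⟩ := Fin.exists_succAbove_eq hne
    have : e ∈ T.filter fun e => G.tgt e = r.succAbove j := mem_filter.mpr ⟨he, hj.symm⟩
    exact ⟨j, (mem_singleton.mp (hf j ▸ this)).symm⟩

theorem image_injOn_inEdgeChoices [DecidableEq E] :
    Set.InjOn (fun f : Fin n → E => univ.image f) (G.inEdgeChoices r) := by
  intro f hf g hg hfg
  funext j
  have hfj : f j ∈ univ.image g := by
    rw [← show univ.image f = univ.image g from hfg]
    exact mem_image_of_mem f (mem_univ j)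
  obtain ⟨k, -, hk⟩ := mem_image.mp hfj
  rw [mem_coe, mem_inEdgeChoices] at hf hg
  rw [Fin.succAbove_right_injective ((hg k).symm.trans (hk ▸ hf j))] at hk
  exact hk.symm

theorem treeCount_eq_sum_inEdgeChoices (w : E → ℤ)
    [DecidablePred fun f => WellFounded fun i j => G.parent r f j = some i] :
    treeCount G w r
      = ∑ f ∈ (G.inEdgeChoices r).filter (fun f => WellFounded fun i j => G.parent r f j = some i),
          ∏ j, w (f j) := by
  classical
  rw [treeCount, ← sum_filter]
  symm
  refine sum_bij (fun f _ => univ.image f) (fun f hf => ?_) (fun f hf g hg => ?_) (fun T hT => ?_)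
    (fun f hf => ?_)
  · rw [mem_filter] at hf ⊢
    exact ⟨mem_univ _, (isOrientedSpanningTree_image_iff hf.1).mpr hf.2⟩
  · exact image_injOn_inEdgeChoices (mem_filter.mp hf).1 (mem_filter.mp hg).1
  · obtain ⟨f, hf, rfl⟩ := exists_image_eq_of_isOrientedSpanningTree (mem_filter.mp hT).2
    exact ⟨f, mem_filter.mpr ⟨hf, (isOrientedSpanningTree_image_iff hf).mp (mem_filter.mp hT).2⟩,
      rfl⟩
  · rw [prod_image (injective_of_mem_inEdgeChoices (mem_filter.mp hf).1).injOn]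

end Multidigraph

theorem matrix_tree_theorem_general (n : ℕ) (E : Type) [Fintype E]
    (G : Multidigraph (Fin (n + 1)) E) (w : E → ℤ)
    (a : Fin (n + 1) → Fin (n + 1) → ℤ)
    (ha_diag : ∀ i, a i i = 0)
    (ha_off : ∀ i j, i ≠ j →
      a i j = ∑ e ∈ Finset.univ.filter (fun e => G.src e = i ∧ G.tgt e = j), w e)
    (L : Matrix (Fin (n + 1)) (Fin (n + 1)) ℤ)
    (hL_off : ∀ i j, i ≠ j → L i j = -a i j)
    (hL_diag : ∀ j, L j j = ∑ k, a k j)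
    (r : Fin (n + 1)) :
    (L.submatrix r.succAbove r.succAbove).det = treeCount G w r := by
  classical
  rw [G.det_laplacian_submatrix w a ha_diag ha_off L hL_off hL_diag,
    Multidigraph.treeCount_eq_sum_inEdgeChoices]

/-- **Matrix tree theorem.** For a finite weighted directed multigraph `G` on the
vertex set `Fin (n+1)` with Laplacian matrix `L` (where `L i j = -a i j` for
`i ≠ j` and `L j j = ∑ k, a k j`, with `a i j` the total weight of edges from
`v_i` to `v_j` for `i ≠ j` and `a i i = 0`), the determinant of the matrix
obtained from `L` by deleting the `r`-th row and column equals the weighted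
number of oriented spanning trees rooted at `v_r`. -/
theorem matrix_tree_theorem (n : ℕ) (E : Type) [Fintype E] [DecidableEq E]
    (G : Multidigraph (Fin (n + 1)) E) (w : E → ℤ)
    (a : Fin (n + 1) → Fin (n + 1) → ℤ)
    (ha_diag : ∀ i, a i i = 0)
    (ha_off : ∀ i j, i ≠ j →
      a i j = ∑ e ∈ Finset.univ.filter (fun e => G.src e = i ∧ G.tgt e = j), w e)
    (L : Matrix (Fin (n + 1)) (Fin (n + 1)) ℤ)
    (hL_off : ∀ i j, i ≠ j → L i j = -a i j)
    (hL_diag : ∀ j, L j j = ∑ k, a k j)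
    (r : Fin (n + 1)) :
    (L.submatrix r.succAbove r.succAbove).det = treeCount G w r :=
  matrix_tree_theorem_general n E G w a ha_diag ha_off L hL_off hL_diag r
end

section
/- Let L be an n×n matrix over a commutative ring such that every row of L sums to 0 and every column of L sums to 0. Then all cofactors of L are equal; that is, for all indices i, j, k, l, the (i,j) cofactor (−1)^{i+j} det(L with row i and column j deleted) equals the (k,l) cofactor. -/
open Matrix Finset

/-- If every column of `L` sums to zero, then `det (L.updateRow i (Pi.single j 1))`
does not depend on `i`. -/
lemma det_updateRow_single_indep {R : Type} [CommRing R] {n : ℕ}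
    (L : Matrix (Fin (n + 1)) (Fin (n + 1)) R)
    (hcol : ∀ c, ∑ r, L r c = 0) (j i k : Fin (n + 1)) :
    (L.updateRow i (Pi.single j 1)).det = (L.updateRow k (Pi.single j 1)).det := by
  rcases eq_or_ne i k with rfl | hik
  · rfl
  set e : Fin (n + 1) → R := Pi.single j 1 with he
  set M := L.updateRow i e with hM
  set s : Finset (Fin (n + 1)) := (Finset.univ.erase k).erase i with hs
  have hks : k ∉ s := by simp [hs]
  have his : i ∈ Finset.univ.erase k := by simp [hik]
  have hMk : M k = L k := by
    rw [hM]; exact Matrix.updateRow_ne (Ne.symm hik)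
  have hMr : ∀ r ∈ s, M r = L r := by
    intro r hr
    have : r ≠ i := by simp [hs] at hr; exact hr.1
    rw [hM]; exact Matrix.updateRow_ne this
  -- express row k of M as a linear combination
  have hsum : M k = (0 : R) • M k + ∑ r ∈ s, (-1 : R) • M r + (-1 : R) • L i := by
    funext c
    have e0 := hcol c
    rw [← Finset.add_sum_erase _ (fun r => L r c) (Finset.mem_univ k),
        ← Finset.add_sum_erase _ (fun r => L r c) his] at e0
    have hsum' : ∑ x ∈ s, (-1 : R) * M x c = -∑ r ∈ s, L r c := by
      rw [Finset.sum_congr rfl (fun r hr => by rw [hMr r hr] :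
        ∀ r ∈ s, (-1 : R) * M r c = (-1 : R) * L r c)]
      simp [Finset.sum_neg_distrib, neg_mul]
    have hMkc : M k c = L k c := congrFun hMk c
    simp only [Pi.add_apply, Pi.smul_apply, Finset.sum_apply, smul_eq_mul,
      zero_mul, zero_add]
    rw [hMkc, hsum']
    linear_combination e0
  have hdetM : M.det = ((M.updateRow k ((0 : R) • M k + ∑ r ∈ s, (-1 : R) • M r)).det)
      + (M.updateRow k ((-1 : R) • L i)).det := by
    conv_lhs => rw [← Matrix.updateRow_eq_self M k, hsum]
    rw [Matrix.det_updateRow_add]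
  have hzero : (M.updateRow k ((0 : R) • M k + ∑ r ∈ s, (-1 : R) • M r)).det = 0 := by
    rw [Matrix.det_updateRow_sum_aux M s hks (fun _ => (-1 : R)) 0]
    simp
  -- the swap identity
  have hswap : M.updateRow k (L i) = (L.updateRow k e).submatrix (Equiv.swap i k) id := by
    ext r c
    rcases eq_or_ne r i with rfl | hri
    · simp [hM, Matrix.updateRow_apply, hik, Equiv.swap_apply_left]
    rcases eq_or_ne r k with rfl | hrk
    · simp [hM, Matrix.updateRow_apply, Ne.symm hik, Equiv.swap_apply_right, hik]
    · simp [hM, Matrix.updateRow_apply, hri, hrk,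
        Equiv.swap_apply_of_ne_of_ne hri hrk]
  have hsign : ((L.updateRow k e).submatrix (Equiv.swap i k) id).det
      = -(L.updateRow k e).det := by
    rw [Matrix.det_permute, Equiv.Perm.sign_swap hik]
    simp
  have hsmul : (M.updateRow k ((-1 : R) • L i)).det
      = (-1 : R) * (M.updateRow k (L i)).det := Matrix.det_updateRow_smul M k (-1) (L i)
  calc M.det = 0 + (-1 : R) * (M.updateRow k (L i)).det := by rw [hdetM, hzero, hsmul]
    _ = (-1 : R) * (-(L.updateRow k e).det) := by rw [hswap, hsign, zero_add]
    _ = (L.updateRow k e).det := by ring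

/-- If every column of `L` sums to zero, then the adjugate entries `adjugate L j i`
do not depend on `i`. -/
lemma adjugate_indep {R : Type} [CommRing R] {n : ℕ}
    (L : Matrix (Fin (n + 1)) (Fin (n + 1)) R)
    (hcol : ∀ c, ∑ r, L r c = 0) (j i k : Fin (n + 1)) :
    L.adjugate j i = L.adjugate j k := by
  rw [Matrix.adjugate_apply, Matrix.adjugate_apply]
  exact det_updateRow_single_indep L hcol j i k

/-- The `(i,j)` cofactor of an `(n+1) × (n+1)` matrix `L`: `(-1)^(i+j)` times the
determinant of the matrix obtained from `L` by deleting row `i` and column `j`. -/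
def cofactor {R : Type} [CommRing R] {n : ℕ}
    (L : Matrix (Fin (n + 1)) (Fin (n + 1)) R) (i j : Fin (n + 1)) : R :=
  (-1 : R) ^ ((i : ℕ) + (j : ℕ)) * (L.submatrix i.succAbove j.succAbove).det

lemma cofactor_eq_adjugate {R : Type} [CommRing R] {n : ℕ}
    (L : Matrix (Fin (n + 1)) (Fin (n + 1)) R) (i j : Fin (n + 1)) :
    cofactor L i j = L.adjugate j i := by
  rw [Matrix.adjugate_fin_succ_eq_det_submatrix, cofactor]

/-- If every row and every column of a square matrix `L` over a commutative ring
sums to `0`, then all cofactors of `L` are equal. -/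
theorem cofactors_all_equal {R : Type} [CommRing R] {n : ℕ}
    (L : Matrix (Fin (n + 1)) (Fin (n + 1)) R)
    (hrow : ∀ i, ∑ j, L i j = 0)
    (hcol : ∀ j, ∑ i, L i j = 0)
    (i j k l : Fin (n + 1)) :
    cofactor L i j = cofactor L k l := by
  have htrans : ∀ a b : Fin (n + 1), L.adjugate a b = Lᵀ.adjugate b a := by
    intro a b
    rw [← Matrix.adjugate_transpose, Matrix.transpose_apply]
  have hcolT : ∀ c, ∑ r, Lᵀ r c = 0 := fun c => hrow c
  calc cofactor L i j = L.adjugate j i := cofactor_eq_adjugate L i j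
    _ = L.adjugate j k := adjugate_indep L hcol j i k
    _ = Lᵀ.adjugate k j := htrans j k
    _ = Lᵀ.adjugate k l := adjugate_indep Lᵀ hcolT k j l
    _ = L.adjugate l k := (htrans l k).symm
    _ = cofactor L k l := (cofactor_eq_adjugate L k l).symm
end

section
/- Let L be an n×n matrix over a commutative ring such that every row of L sums to 0 (i.e., Σ_j L_{ij} = 0 for every i). Then within each row the cofactors are all equal: for every i and all j, l, the (i,j) cofactor of L equals the (i,l) cofactor of L. -/
lemma det_eq_zero_of_row_sums_eq_zero {R : Type} [CommRing R] {m : Type}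
    [Fintype m] [DecidableEq m] (A : Matrix m m R) (i0 : m)
    (h : ∀ i, ∑ j, A i j = 0) : A.det = 0 := by
  have h1 : (A.updateCol i0 (fun k => ∑ i, (1 : R) • A k i)).det = (1 : R) • A.det :=
    A.det_updateCol_sum i0 (fun _ => 1)
  simp only [one_smul] at h1
  rw [← h1]
  apply Matrix.det_eq_zero_of_column_eq_zero i0
  intro i
  simp [h i]

/-- If every row of a square matrix `L` over a commutative ring sums to `0`,
then within each row the cofactors are all equal. -/
theorem cofactors_row_equal {R : Type} [CommRing R] {n : ℕ}
    (L : Matrix (Fin (n + 1)) (Fin (n + 1)) R)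
    (hrow : ∀ i, ∑ j, L i j = 0)
    (i j l : Fin (n + 1)) :
    cofactor L i j = cofactor L i l := by
  have key : ∀ (j : Fin (n + 1)),
      cofactor L i j = (L.updateRow i (Pi.single j 1)).det := by
    intro j
    rw [← Matrix.adjugate_apply, Matrix.adjugate_fin_succ_eq_det_submatrix]
    rfl
  rw [key, key]
  have h2 : (L.updateRow i (Pi.single j 1)).det
      = (L.updateRow i (Pi.single l 1)).det
        + (L.updateRow i (Pi.single j 1 - Pi.single l 1)).det := by
    rw [← Matrix.det_updateRow_add]
    congr 1
    ext x
    simp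
  have h3 : (L.updateRow i (Pi.single j 1 - Pi.single l 1)).det = 0 := by
    apply det_eq_zero_of_row_sums_eq_zero _ i
    intro k
    by_cases hk : k = i
    · subst hk
      simp [Finset.sum_sub_distrib, Pi.single_apply]
    · simp [Matrix.updateRow_ne hk, hrow k]
  rw [h2, h3, add_zero]
end

section
/- Let (g, c) be a finite connected directed multigraph with a weight c: E → ℤ, let e be an edge of g, and let (g′, c′) be the graph obtained from g by inserting a new vertex v′ of degree 2 into the edge e (subdividing e into two consecutive edges e_1 pointing into v′ and e_2 pointing out of v′, each carrying weight c(e)), with c′ agreeing with c on all other edges. Then for every vertex r of g, N(g′, c′, r) = c(e) · N(g, c, r). -/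
/-- Undirected connectivity of the underlying undirected graph. -/
def MConnected {V E : Type} (G : Multidigraph V E) : Prop :=
  ∀ u v : V, Relation.ReflTransGen
    (fun x y => ∃ e : E, (G.src e = x ∧ G.tgt e = y) ∨ (G.src e = y ∧ G.tgt e = x)) u v

/-- The graph obtained from `G` by inserting a new vertex `v'` (encoded `Sum.inr ()`)
of degree 2 into the edge `e₀`, subdividing it into `e₁ = Sum.inl e₀` (pointing
from the source of `e₀` into `v'`) and `e₂ = Sum.inr ()` (pointing out of `v'`
to the target of `e₀`); all other edges are unchanged. -/
def subdivide {V E : Type} [DecidableEq E] (G : Multidigraph V E) (e₀ : E) :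
    Multidigraph (V ⊕ Unit) (E ⊕ Unit) where
  src := fun e => match e with
    | Sum.inl e => Sum.inl (G.src e)
    | Sum.inr _ => Sum.inr ()
  tgt := fun e => match e with
    | Sum.inl e => if e = e₀ then Sum.inr () else Sum.inl (G.tgt e)
    | Sum.inr _ => Sum.inl (G.tgt e₀)

/-!
An oriented spanning tree of the subdivided graph rooted at `r` must contain the edge `e₁`, the
only edge into the new vertex `v'`. Deleting `e₁` and renaming `e₂` back to `e₀` is a bijection
onto the oriented spanning trees of `G` rooted at `r`: in-degrees at the old vertices do not
change, and oriented cycles correspond, because bypassing `v'` (replacing the path `e₁ e₂` by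
the single edge `e₀`) turns the step relation of the one tree into that of the other. The weights
of corresponding trees differ exactly by the factor `c(e₁) = c(e₀)`.
-/

open Relation Sum

namespace Multidigraph

variable {V E : Type} (G : Multidigraph V E)

def edgeRel (T : Finset E) (x y : V) : Prop :=
  ∃ e ∈ T, G.src e = x ∧ G.tgt e = y

variable {G}

lemma transGen_edgeRel_of_isChain {T : Finset E} {l : List E} (hl : l ≠ [])
    (hT : ∀ e ∈ l, e ∈ T) (hc : l.IsChain fun e f => G.tgt e = G.src f) :
    TransGen (G.edgeRel T) (G.src (l.head hl)) (G.tgt (l.getLast hl)) := by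
  refine List.IsChain.induction (fun e => TransGen (G.edgeRel T) (G.src (l.head hl)) (G.tgt e))
    l (List.IsChain.iff_mem.mp hc) ?_ ?_ _ (List.getLast_mem hl)
  · rintro e f ⟨-, hf, hef⟩ h
    exact h.tail ⟨f, hT f hf, hef.symm, rfl⟩
  · intro hl'
    exact .single ⟨_, hT _ (List.head_mem hl'), rfl, rfl⟩

lemma exists_isChain_of_transGen_edgeRel {T : Finset E} {a b : V}
    (h : TransGen (G.edgeRel T) a b) :
    ∃ l : List E, l ≠ [] ∧ (∀ e ∈ l, e ∈ T) ∧ (l.IsChain fun e f => G.tgt e = G.src f) ∧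
      (∀ e ∈ l.head?, G.src e = a) ∧ ∀ e ∈ l.getLast?, G.tgt e = b := by
  induction h using TransGen.head_induction_on with
  | single h =>
    obtain ⟨e, he, rfl, rfl⟩ := h
    exact ⟨[e], by simp, by simpa using he, List.isChain_singleton e, by simp, by simp⟩
  | head h _ ih =>
    obtain ⟨e, he, rfl, hc⟩ := h
    obtain ⟨l, hl, hlT, hlc, hhead, hlast⟩ := ih
    refine ⟨e :: l, by simp, by simpa [he] using hlT, List.isChain_cons.mpr ⟨?_, hlc⟩,
      by simp, ?_⟩
    · exact fun f hf => hc.trans (hhead f hf).symm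
    · simpa [List.getLast?_cons, Option.getD_eq_iff, hl] using hlast

lemma exists_cycle_iff_exists_transGen_self (T : Finset E) :
    (∃ l : List E, l ≠ [] ∧ (∀ e ∈ l, e ∈ T) ∧ l.IsChain (fun e f => G.tgt e = G.src f) ∧
        ∀ e₁ ∈ l.head?, ∀ e₂ ∈ l.getLast?, G.tgt e₂ = G.src e₁) ↔
      ∃ v, TransGen (G.edgeRel T) v v := by
  constructor
  · rintro ⟨l, hl, hT, hc, hclosed⟩
    refine ⟨G.src (l.head hl), ?_⟩
    have := transGen_edgeRel_of_isChain hl hT hc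
    rwa [hclosed _ (List.head?_eq_some_head hl) _ (List.getLast?_eq_some_getLast hl)] at this
  · rintro ⟨v, h⟩
    obtain ⟨l, hl, hT, hc, hhead, hlast⟩ := exists_isChain_of_transGen_edgeRel h
    exact ⟨l, hl, hT, hc, fun e₁ h₁ e₂ h₂ => (hlast e₂ h₂).trans (hhead e₁ h₁).symm⟩

lemma isOrientedSpanningTree_iff [Fintype E] [DecidableEq V] (G : Multidigraph V E) (r : V)
    (T : Finset E) :
    IsOrientedSpanningTree G r T ↔
      (∀ v, v ≠ r → (T.filter fun e => G.tgt e = v).card = 1) ∧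
      (T.filter fun e => G.tgt e = r).card = 0 ∧ ¬ ∃ v, TransGen (G.edgeRel T) v v :=
  Iff.rfl.and (Iff.rfl.and (not_congr (exists_cycle_iff_exists_transGen_self T)))

end Multidigraph

namespace Relation

variable {α : Type*}

def skipInr (r : α ⊕ Unit → α ⊕ Unit → Prop) (x y : α) : Prop :=
  r (inl x) (inl y) ∨ r (inl x) (inr ()) ∧ r (inr ()) (inl y)

variable {r : α ⊕ Unit → α ⊕ Unit → Prop}

lemma transGen_of_skipInr {x y : α} (h : skipInr r x y) : TransGen r (inl x) (inl y) := by
  rcases h with h | ⟨h₁, h₂⟩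
  · exact .single h
  · exact .tail (.single h₁) h₂

lemma transGen_skipInr_of_transGen (hr : ¬ r (inr ()) (inr ())) {x : α} {b : α ⊕ Unit}
    (h : TransGen r (inl x) b) :
    b.elim (TransGen (skipInr r) x) fun _ => ∃ z, ReflTransGen (skipInr r) x z ∧ r (inl z) b := by
  induction h with
  | @single b h =>
    rcases b with y | ⟨⟩
    · exact .single (.inl h)
    · exact ⟨x, .refl, h⟩
  | @tail b c _ hbc ih =>
    rcases b with y | ⟨⟩ <;> rcases c with y' | ⟨⟩
    · exact .tail ih (.inl hbc)
    · exact ⟨y, ih.to_reflTransGen, hbc⟩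
    · obtain ⟨z, hxz, hz⟩ := ih
      exact TransGen.tail'_iff.mpr ⟨z, hxz, .inr ⟨hz, hbc⟩⟩
    · exact absurd hbc hr

lemma transGen_skipInr_iff (hr : ¬ r (inr ()) (inr ())) {x y : α} :
    TransGen (skipInr r) x y ↔ TransGen r (inl x) (inl y) :=
  ⟨fun h => TransGen.lift' inl (fun _ _ => transGen_of_skipInr) _ _ h,
    transGen_skipInr_of_transGen hr⟩

lemma exists_transGen_self_iff_skipInr (hr : ¬ r (inr ()) (inr ())) :
    (∃ a, TransGen r a a) ↔ ∃ x, TransGen (skipInr r) x x := by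
  simp only [transGen_skipInr_iff hr]
  refine ⟨?_, fun ⟨x, h⟩ => ⟨inl x, h⟩⟩
  rintro ⟨a | ⟨⟩, h⟩
  · exact ⟨a, h⟩
  · -- a cycle through `inr ()` is rotated to start at its next vertex
    obtain ⟨b, hab, hba⟩ := TransGen.head'_iff.mp h
    rcases b with x | ⟨⟩
    · exact ⟨x, TransGen.tail'_iff.mpr ⟨_, hba, hab⟩⟩
    · exact absurd hab hr

end Relation

namespace Multidigraph

variable {V E : Type} [DecidableEq E] {G : Multidigraph V E} {e₀ : E}

/-- The edge `e₀` of `G` corresponds to the second half `inr ()` of the subdivided edge. -/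
def subdivideEmb (e₀ : E) : E ↪ E ⊕ Unit where
  toFun e := if e = e₀ then inr () else inl e
  inj' a b hab := by
    by_cases ha : a = e₀ <;> by_cases hb : b = e₀ <;> simp_all

lemma subdivideEmb_apply (e : E) :
    subdivideEmb e₀ e = if e = e₀ then inr () else inl e :=
  rfl

def subdivideEdges (e₀ : E) (T : Finset E) : Finset (E ⊕ Unit) :=
  insert (inl e₀) (T.map (subdivideEmb e₀))

@[simp]
lemma tgt_subdivide_subdivideEmb (e : E) :
    (subdivide G e₀).tgt (subdivideEmb e₀ e) = inl (G.tgt e) := by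
  by_cases he : e = e₀ <;> simp [subdivideEmb_apply, subdivide, he]

lemma tgt_subdivide_eq_inr_iff {e : E ⊕ Unit} :
    (subdivide G e₀).tgt e = inr () ↔ e = inl e₀ := by
  rcases e with e | ⟨⟩
  · by_cases he : e = e₀ <;> simp [subdivide, he]
  · simp [subdivide]

@[simp]
lemma inl_mem_subdivideEdges {T : Finset E} {e : E} :
    inl e ∈ subdivideEdges e₀ T ↔ e = e₀ ∨ e ∈ T := by
  by_cases he : e = e₀
  · simp [subdivideEdges, he]
  · simp only [subdivideEdges, Finset.mem_insert, inl.injEq, he, false_or, Finset.mem_map]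
    exact ⟨fun ⟨a, ha, hae⟩ => by grind [subdivideEmb_apply], fun h => ⟨e, h, if_neg he⟩⟩

@[simp]
lemma inr_mem_subdivideEdges {T : Finset E} {u : Unit} :
    inr u ∈ subdivideEdges e₀ T ↔ e₀ ∈ T := by
  simp [subdivideEdges, subdivideEmb_apply]

lemma subdivideEdges_injective : Function.Injective (subdivideEdges (E := E) e₀) := by
  intro T T' h
  ext e
  by_cases he : e = e₀
  · subst he
    simpa using congrArg (inr () ∈ ·) h
  · simpa [he] using congrArg (inl e ∈ ·) h

lemma exists_subdivideEdges_eq {T' : Finset (E ⊕ Unit)} (h : inl e₀ ∈ T') :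
    ∃ T, subdivideEdges e₀ T = T' := by
  refine ⟨T'.preimage (subdivideEmb e₀) (subdivideEmb e₀).injective.injOn, ?_⟩
  ext e
  rcases e with e | ⟨⟩
  · by_cases he : e = e₀
    · simp [he, h]
    · simp [he, subdivideEmb_apply]
  · simp [subdivideEmb_apply]

lemma prod_subdivideEdges (c : E → ℤ) (T : Finset E) :
    ∏ e ∈ subdivideEdges e₀ T, Sum.elim c (fun _ => c e₀) e = c e₀ * ∏ e ∈ T, c e := by
  have hw : ∀ e, Sum.elim c (fun _ => c e₀) (subdivideEmb e₀ e) = c e := by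
    intro e
    by_cases he : e = e₀ <;> simp [subdivideEmb_apply, he]
  rw [subdivideEdges, Finset.prod_insert (by simp [subdivideEmb_apply]; grind), Finset.prod_map]
  simp only [hw, Sum.elim_inl]

lemma not_edgeRel_subdivide_inr_inr (T' : Finset (E ⊕ Unit)) :
    ¬ (subdivide G e₀).edgeRel T' (inr ()) (inr ()) := by
  rintro ⟨e | ⟨⟩, -, hs, ht⟩ <;> simp [subdivide] at hs ht

lemma skipInr_edgeRel_subdivide (T : Finset E) :
    skipInr ((subdivide G e₀).edgeRel (subdivideEdges e₀ T)) = G.edgeRel T := by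
  ext x y
  simp only [skipInr, edgeRel]
  constructor
  · rintro (⟨e | ⟨⟩, he, hs, ht⟩ | ⟨⟨e₁ | ⟨⟩, he₁, hs₁, ht₁⟩, ⟨e₂ | ⟨⟩, he₂, hs₂, ht₂⟩⟩) <;>
      simp_all [subdivide] <;> grind
  · rintro ⟨e, he, rfl, rfl⟩
    by_cases h : e = e₀
    · subst h
      exact .inr ⟨⟨inl e, by simp, rfl, by simp [subdivide]⟩, ⟨inr (), by simpa, rfl, rfl⟩⟩
    · exact .inl ⟨inl e, by simp [he], rfl, by simp [subdivide, h]⟩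

variable [DecidableEq V]

lemma filter_tgt_subdivideEdges_inl (T : Finset E) (v : V) :
    (subdivideEdges e₀ T).filter (fun e => (subdivide G e₀).tgt e = inl v) =
      (T.filter fun e => G.tgt e = v).map (subdivideEmb e₀) := by
  rw [subdivideEdges, Finset.filter_insert, if_neg (by simp [subdivide]), Finset.filter_map]
  congr 1
  ext e
  simp

lemma card_filter_tgt_subdivideEdges_inl (T : Finset E) (v : V) :
    ((subdivideEdges e₀ T).filter fun e => (subdivide G e₀).tgt e = inl v).card =
      (T.filter fun e => G.tgt e = v).card := by
  rw [filter_tgt_subdivideEdges_inl, Finset.card_map]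

lemma card_filter_tgt_eq_inr_eq_one_iff {T' : Finset (E ⊕ Unit)} :
    (T'.filter fun e => (subdivide G e₀).tgt e = inr ()).card = 1 ↔ inl e₀ ∈ T' := by
  simp only [tgt_subdivide_eq_inr_iff, Finset.filter_eq']
  split_ifs with h <;> simp [h]

variable [Fintype E]

lemma isOrientedSpanningTree_subdivide_iff (r : V) (T : Finset E) :
    IsOrientedSpanningTree (subdivide G e₀) (inl r) (subdivideEdges e₀ T) ↔
      IsOrientedSpanningTree G r T := by
  rw [isOrientedSpanningTree_iff, isOrientedSpanningTree_iff,
    exists_transGen_self_iff_skipInr (not_edgeRel_subdivide_inr_inr _), skipInr_edgeRel_subdivide]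
  simp [Sum.forall, card_filter_tgt_subdivideEdges_inl, card_filter_tgt_eq_inr_eq_one_iff]

lemma inl_mem_of_isOrientedSpanningTree_subdivide {r : V} {T' : Finset (E ⊕ Unit)}
    (h : IsOrientedSpanningTree (subdivide G e₀) (inl r) T') : inl e₀ ∈ T' :=
  card_filter_tgt_eq_inr_eq_one_iff.mp (h.1 (inr ()) inr_ne_inl)

end Multidigraph

open Multidigraph

theorem treeCount_subdivide_general {V E : Type} [Fintype E] [DecidableEq V] [DecidableEq E]
    (G : Multidigraph V E) (c : E → ℤ) (e₀ : E) (r : V) :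
    treeCount (subdivide G e₀)
        (fun e => match e with
          | Sum.inl e => c e
          | Sum.inr _ => c e₀)
        (Sum.inl r)
      = c e₀ * treeCount G c r := by
  classical
  have hw : (fun e : E ⊕ Unit => match e with
      | Sum.inl e => c e
      | Sum.inr _ => c e₀) = Sum.elim c fun _ => c e₀ := by
    funext e
    cases e <;> rfl
  rw [hw, treeCount, treeCount, Finset.mul_sum]
  symm
  refine Finset.sum_of_injOn (subdivideEdges e₀) subdivideEdges_injective.injOn
    (by simp [Set.MapsTo]) (fun T' _ hT' => if_neg fun htree => ?_) fun T _ => ?_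
  · obtain ⟨T, rfl⟩ := exists_subdivideEdges_eq (inl_mem_of_isOrientedSpanningTree_subdivide htree)
    exact hT' ⟨T, by simp, rfl⟩
  · rw [prod_subdivideEdges, mul_ite, mul_zero]
    exact if_congr (isOrientedSpanningTree_subdivide_iff r T).symm rfl rfl

/-- Inserting a degree-2 vertex into an edge `e₀` of a finite connected directed
multigraph `(g, c)` (both new edges carrying the weight `c e₀`) multiplies the
weighted number of oriented spanning trees rooted at any vertex `r` by `c e₀`. -/
theorem treeCount_subdivide {V E : Type} [Fintype V] [Fintype E] [DecidableEq V] [DecidableEq E]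
    (G : Multidigraph V E) (c : E → ℤ) (e₀ : E)
    (hconn : MConnected G) (r : V) :
    treeCount (subdivide G e₀)
        (fun e => match e with
          | Sum.inl e => c e
          | Sum.inr _ => c e₀)
        (Sum.inl r)
      = c e₀ * treeCount G c r :=
  treeCount_subdivide_general G c e₀ r
end

section
/- Let i ≤ j be positive integers and let Γ be a finite connected directed multigraph with a positive balanced weight containing distinct vertices a, b, c, d and two distinguished edges: an edge from c to b of weight i and an edge from d to a of weight j. Let Γ_1 be the graph obtained from Γ by deleting these two edges and adding two new vertices v_1, v_2 together with edges c→v_2 of weight i, v_2→a of weight j, d→v_1 of weight j, v_1→b of weight i, and v_1→v_2 of weight j−i (the last edge omitted if i = j). Let Γ_2 be the graph obtained from Γ by deleting the two distinguished edges and adding two new vertices v_1, v_2 together with edges c→v_1 of weight i, d→v_1 of weight j, v_1→v_2 of weight i+j, v_2→a of weight j, and v_2→b of weight i. Then for every root r chosen among the vertices of Γ: i·j·(i+j) · N(Γ, r) = −(i+j) · N(Γ_1, r) + j · N(Γ_2, r), i.e., N(Γ, r) = (−1/(i·j)) · N(Γ_1, r) + (1/(i·(i+j))) · N(Γ_2,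 r). -/
/-- A weight is balanced if at each vertex the incoming and outgoing weights agree. -/
def IsBalanced {V E : Type} [Fintype E] [DecidableEq V]
    (G : Multidigraph V E) (w : E → ℤ) : Prop :=
  ∀ v : V, ∑ e ∈ Finset.univ.filter (fun e => G.tgt e = v), w e
         = ∑ e ∈ Finset.univ.filter (fun e => G.src e = v), w e

section Skein

variable {V E : Type} [DecidableEq E]

/-- The graph `Γ₁` (for the case `i ≤ j`): delete the two distinguished edges
`e₁ : c → b` and `e₂ : d → a`, add two new vertices `v₁ = Sum.inr 0` and
`v₂ = Sum.inr 1`, and add edges `c → v₂`, `v₂ → a`, `d → v₁`, `v₁ → b`, together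
with an edge `v₁ → v₂` which is present exactly when `i ≠ j`. -/
def Gamma1 (G : Multidigraph V E) (e₁ e₂ : E) (a b c d : V) (i j : ℤ) :
    Multidigraph (V ⊕ Fin 2) ({e : E // e ≠ e₁ ∧ e ≠ e₂} ⊕ (Fin 4 ⊕ {u : Unit // i ≠ j})) where
  src := Sum.elim (fun e => Sum.inl (G.src e.1))
    (Sum.elim ![Sum.inl c, Sum.inr 1, Sum.inl d, Sum.inr 0] (fun _ => Sum.inr 0))
  tgt := Sum.elim (fun e => Sum.inl (G.tgt e.1))
    (Sum.elim ![Sum.inr 1, Sum.inl a, Sum.inr 0, Sum.inl b] (fun _ => Sum.inr 1))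

/-- The weight on `Γ₁` for the case `i ≤ j`: old edges keep their weight, the new
edges `c → v₂`, `v₂ → a`, `d → v₁`, `v₁ → b` have weights `i, j, j, i`, and the
optional edge `v₁ → v₂` has weight `j - i`. -/
def weight1 (w : E → ℤ) (e₁ e₂ : E) (i j : ℤ) :
    ({e : E // e ≠ e₁ ∧ e ≠ e₂} ⊕ (Fin 4 ⊕ {u : Unit // i ≠ j})) → ℤ :=
  Sum.elim (fun e => w e.1) (Sum.elim ![i, j, j, i] (fun _ => j - i))

/-- The graph `Γ₂`: delete the two distinguished edges `e₁ : c → b` and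
`e₂ : d → a`, add two new vertices `v₁ = Sum.inr 0` and `v₂ = Sum.inr 1`, and add
edges `c → v₁`, `d → v₁`, `v₁ → v₂`, `v₂ → a`, `v₂ → b`. -/
def Gamma2 (G : Multidigraph V E) (e₁ e₂ : E) (a b c d : V) :
    Multidigraph (V ⊕ Fin 2) ({e : E // e ≠ e₁ ∧ e ≠ e₂} ⊕ Fin 5) where
  src := Sum.elim (fun e => Sum.inl (G.src e.1))
    ![Sum.inl c, Sum.inl d, Sum.inr 0, Sum.inr 1, Sum.inr 1]
  tgt := Sum.elim (fun e => Sum.inl (G.tgt e.1))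
    ![Sum.inr 0, Sum.inr 0, Sum.inr 1, Sum.inl a, Sum.inl b]

/-- The weight on `Γ₂`: old edges keep their weight, and the new edges
`c → v₁`, `d → v₁`, `v₁ → v₂`, `v₂ → a`, `v₂ → b` have weights `i, j, i+j, j, i`. -/
def weight2 (w : E → ℤ) (e₁ e₂ : E) (i j : ℤ) :
    ({e : E // e ≠ e₁ ∧ e ≠ e₂} ⊕ Fin 5) → ℤ :=
  Sum.elim (fun e => w e.1) ![i, j, i + j, j, i]

end Skein

/-!
Write `Γ_{x,y}` for `Γ` with `e₁` and `e₂` moved to start at `x` and `y`, so that `Γ = Γ_{c,d}`,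
and split a spanning tree of `Γ₁` or `Γ₂` into its edges ending at the new vertices `v₁`, `v₂`
and the rest. In `Γ₂`, `v₁` hangs from `c` or from `d` and `v₂` from `v₁`; contracting this chain
turns the trees into those of `Γ_{c,c}` or of `Γ_{d,d}`, so
`N(Γ₂) = i(i+j) N(Γ_{c,c}) + j(i+j) N(Γ_{d,d})`. In `Γ₁`, `v₁` hangs from `d` and `v₂` from `c` or
from `v₁`, so `N(Γ₁) = ij N(Γ_{d,c}) + j(j-i) N(Γ_{d,d})`.

The theorem is then the exchange identity `N(Γ_{c,d}) + N(Γ_{d,c}) = N(Γ_{c,c}) + N(Γ_{d,d})`,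
which holds edge set by edge set. If the other edges form a forest with roots `r`, `a`, `b`, then
adding `x → b` and `y → a` gives a tree iff the path up from `x` ends at `r` and the one from `y`
does not end at `a`, or the one from `x` ends at `a` and the one from `y` at `r`; this happens for
as many of the pairs `(c,d)`, `(d,c)` as of the pairs `(c,c)`, `(d,d)`.
-/

open Finset Relation

theorem ite_add_ite_eq_of_iff {M : Type*} [AddCommMonoid M] {A B C D : Prop} [Decidable A]
    [Decidable B] [Decidable C] [Decidable D] (h₁ : A ∨ B ↔ C ∨ D) (h₂ : A ∧ B ↔ C ∧ D) (m : M) :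
    (if A then m else 0) + (if B then m else 0) = (if C then m else 0) + (if D then m else 0) := by
  by_cases A <;> by_cases B <;> by_cases C <;> by_cases D <;> simp_all

theorem Finset.card_filter_disjSum {α β : Type*} (s : Finset α) (t : Finset β) (p : α ⊕ β → Prop)
    [DecidablePred p] :
    ((s.disjSum t).filter p).card =
      (s.filter (p ∘ Sum.inl)).card + (t.filter (p ∘ Sum.inr)).card := by
  rw [← card_disjSum]
  congr 1
  ext (x | x) <;> simp

namespace Relation

theorem ReflTransGen.invariant {α : Type*} {R : α → α → Prop} {Z : α → Prop}
    (hZ : ∀ v u, Z v → R v u → Z u) {v u : α} (h : ReflTransGen R v u) (hv : Z v) : Z u := by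
  induction h with
  | refl => exact hv
  | tail _ hst ih => exact hZ _ _ ih hst

theorem _root_.Finite.exists_transGen_self {α : Type*} [Finite α] {R : α → α → Prop} {s : Set α}
    (hs : s.Nonempty) (h : ∀ v ∈ s, ∃ u ∈ s, R v u) : ∃ v, TransGen R v v := by
  by_contra! hcyc
  have : IsTrans α (flip (TransGen R)) := ⟨fun _ _ _ h₁ h₂ => h₂.trans h₁⟩
  have : Std.Irrefl (flip (TransGen R)) := ⟨hcyc⟩
  obtain ⟨m, hm, hmin⟩ := (Finite.wellFounded_of_trans_of_irrefl (flip (TransGen R))).has_min s hs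
  obtain ⟨u, hu, hmu⟩ := h m hm
  exact hmin u hu (.single hmu)

theorem reflTransGen_iff_of_retract {α β : Type*} {R : β → β → Prop} {S : α → α → Prop}
    (ι : α → β) (π : β → α) (hπι : ∀ a, π (ι a) = a)
    (hR : ∀ x y, R x y → ReflTransGen S (π x) (π y))
    (hS : ∀ a b, S a b → ReflTransGen R (ι a) (ι b))
    (hι : ∀ x, ReflTransGen R x (ι (π x))) (r : α) :
    (∀ x, ReflTransGen R x (ι r)) ↔ ∀ a, ReflTransGen S a r := by
  refine ⟨fun h a => ?_, fun h x => (hι x).trans (ReflTransGen.lift' ι hS _ _ (h (π x)))⟩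
  simpa [hπι, Function.onFun] using ReflTransGen.lift' π hR _ _ (h (ι a))

variable {α : Type*} {R : α → α → Prop}

theorem ReflTransGen.of_step_of_terminal (hR : Relator.RightUnique R) {t v u : α}
    (ht : ∀ u, ¬ R t u) (h : ReflTransGen R v t) (hvu : R v u) : ReflTransGen R u t := by
  rcases h.cases_head with rfl | ⟨u', hvu', hu't⟩
  · exact absurd hvu (ht u)
  · rwa [hR hvu hvu']

theorem not_reflTransGen_and_of_terminal (hR : Relator.RightUnique R) {t t' : α}
    (ht : ∀ u, ¬ R t u) (ht' : ∀ u, ¬ R t' u) (hne : t ≠ t') (v : α) :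
    ¬ (ReflTransGen R v t ∧ ReflTransGen R v t') := fun ⟨h, h'⟩ =>
  (ReflTransGen.total_of_right_unique hR h h').elim
    (fun h => hne ((reflTransGen_iff_eq ht).1 h).symm) fun h => hne ((reflTransGen_iff_eq ht').1 h)

def addArcs (R : α → α → Prop) (b x a y : α) (v u : α) : Prop :=
  R v u ∨ (v = b ∧ u = x) ∨ (v = a ∧ u = y)

theorem addArcs_comm (R : α → α → Prop) (b x a y : α) : addArcs R b x a y = addArcs R a y b x := by
  ext v u
  exact or_congr_right or_comm

theorem reflTransGen_terminal_of_reflTransGen_addArcs {r a b x y v : α}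
    (h : ReflTransGen (addArcs R b x a y) v r) :
    ReflTransGen R v r ∨ ReflTransGen R v a ∨ ReflTransGen R v b := by
  induction h using ReflTransGen.head_induction_on with
  | refl => exact .inl .refl
  | head hvu _ ih =>
    rcases hvu with hvu | ⟨rfl, -⟩ | ⟨rfl, -⟩
    · exact ih.imp (·.head hvu) (Or.imp (·.head hvu) (·.head hvu))
    · exact .inr (.inr .refl)
    · exact .inr (.inl .refl)

theorem forall_reflTransGen_addArcs {r a b x y : α}
    (hend : ∀ v, ReflTransGen R v r ∨ ReflTransGen R v a ∨ ReflTransGen R v b)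
    (hxy : (ReflTransGen R x r ∧ ¬ ReflTransGen R y a) ∨
      (ReflTransGen R x a ∧ ReflTransGen R y r)) (v : α) :
    ReflTransGen (addArcs R b x a y) v r := by
  have lift : ∀ {v u}, ReflTransGen R v u → ReflTransGen (addArcs R b x a y) v u :=
    fun h => ReflTransGen.mono (fun _ _ => Or.inl) _ _ h
  have arc_b : addArcs R b x a y b x := .inr (.inl ⟨rfl, rfl⟩)
  have arc_a : addArcs R b x a y a y := .inr (.inr ⟨rfl, rfl⟩)
  obtain ⟨ha', hb'⟩ : ReflTransGen (addArcs R b x a y) a r ∧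
      ReflTransGen (addArcs R b x a y) b r := by
    rcases hxy with ⟨hx, hy⟩ | ⟨hx, hy⟩
    · have hb' := (lift hx).head arc_b
      refine ⟨.head arc_a ?_, hb'⟩
      rcases hend y with h | h | h
      · exact lift h
      · exact absurd h hy
      · exact (lift h).trans hb'
    · have ha' := (lift hy).head arc_a
      exact ⟨ha', ((lift hx).trans ha').head arc_b⟩
  rcases hend v with h | h | h
  · exact lift h
  · exact (lift h).trans ha'
  · exact (lift h).trans hb'

section Terminals

variable (hR : Relator.RightUnique R) {r a b : α} (hr : ∀ u, ¬ R r u) (ha : ∀ u, ¬ R a u)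
  (hb : ∀ u, ¬ R b u) {x y : α}
include hR hr ha hb

theorem not_reflTransGen_addArcs_of_cycle_b (hab : a ≠ b) (hbr : b ≠ r)
    (hx : ReflTransGen R x b) : ¬ ReflTransGen (addArcs R b x a y) b r := fun h =>
  hbr ((reflTransGen_iff_eq hr).1 (h.invariant (Z := (ReflTransGen R · b)) (by
    rintro v u hv (hvu | ⟨rfl, rfl⟩ | ⟨rfl, rfl⟩)
    · exact hv.of_step_of_terminal hR hb hvu
    · exact hx
    · exact absurd ((reflTransGen_iff_eq ha).1 hv).symm hab) .refl))

theorem not_reflTransGen_addArcs_of_cycle_a (hab : a ≠ b) (har : a ≠ r)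
    (hy : ReflTransGen R y a) : ¬ ReflTransGen (addArcs R b x a y) a r := by
  rw [addArcs_comm]
  exact not_reflTransGen_addArcs_of_cycle_b hR hr hb ha hab.symm har hy

theorem not_reflTransGen_addArcs_of_cycle_ab (har : a ≠ r) (hbr : b ≠ r)
    (hx : ReflTransGen R x a) (hy : ReflTransGen R y b) :
    ¬ ReflTransGen (addArcs R b x a y) a r := by
  intro h
  rcases h.invariant (Z := fun v => ReflTransGen R v a ∨ ReflTransGen R v b) (by
    rintro v u hv (hvu | ⟨rfl, rfl⟩ | ⟨rfl, rfl⟩)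
    · exact hv.imp (·.of_step_of_terminal hR ha hvu) (·.of_step_of_terminal hR hb hvu)
    · exact .inl hx
    · exact .inr hy) (.inl .refl) with h | h
  · exact har ((reflTransGen_iff_eq hr).1 h)
  · exact hbr ((reflTransGen_iff_eq hr).1 h)

/-- The condition on the right says that the new arcs close none of the cycles
`b → x ⇝ b`, `a → y ⇝ a` and `a → y ⇝ b → x ⇝ a`. -/
theorem forall_reflTransGen_addArcs_iff (hab : a ≠ b) (har : a ≠ r) (hbr : b ≠ r) :
    (∀ v, ReflTransGen (addArcs R b x a y) v r) ↔
      (∀ v, ReflTransGen R v r ∨ ReflTransGen R v a ∨ ReflTransGen R v b) ∧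
      ((ReflTransGen R x r ∧ ¬ ReflTransGen R y a) ∨
        (ReflTransGen R x a ∧ ReflTransGen R y r)) := by
  constructor
  · intro h
    have hend := fun v => reflTransGen_terminal_of_reflTransGen_addArcs (h v)
    have hy : ¬ ReflTransGen R y a := fun hy =>
      not_reflTransGen_addArcs_of_cycle_a hR hr ha hb hab har hy (h a)
    refine ⟨hend, ?_⟩
    rcases hend x with hx | hx | hx
    · exact .inl ⟨hx, hy⟩
    · refine .inr ⟨hx, ?_⟩
      rcases hend y with hy' | hy' | hy'
      · exact hy'
      · exact absurd hy' hy
      · exact absurd (h a) (not_reflTransGen_addArcs_of_cycle_ab hR hr ha hb har hbr hx hy')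
    · exact absurd (h b) (not_reflTransGen_addArcs_of_cycle_b hR hr ha hb hab hbr hx)
  · exact fun ⟨hend, hxy⟩ => forall_reflTransGen_addArcs hend hxy

end Terminals

end Relation

namespace Multidigraph

section General

variable {V E E' : Type}

def Step (G : Multidigraph V E) (T : Finset E) (v u : V) : Prop :=
  ∃ e ∈ T, G.tgt e = v ∧ G.src e = u

theorem Step.mono {G : Multidigraph V E} {T T' : Finset E} (h : T ⊆ T') {v u : V} :
    G.Step T v u → G.Step T' v u :=
  fun ⟨e, he, hv, hu⟩ => ⟨e, h he, hv, hu⟩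

theorem reflTransGen_step_of_isChain (G : Multidigraph V E) {T : Finset E} :
    ∀ (e : E) (l : List E), (e :: l).IsChain (fun e f => G.tgt e = G.src f) →
      (∀ f ∈ e :: l, f ∈ T) →
      ReflTransGen (G.Step T) (G.tgt ((e :: l).getLast (List.cons_ne_nil e l))) (G.tgt e)
  | _, [], _, _ => .refl
  | e, f :: l, hch, hT => by
    rw [List.isChain_cons_cons] at hch
    rw [List.getLast_cons_cons]
    exact (reflTransGen_step_of_isChain G f l hch.2 fun g hg => hT g (.tail _ hg)).tail
      ⟨f, hT f (by simp), rfl, hch.1.symm⟩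

theorem exists_isChain_of_transGen (G : Multidigraph V E) {T : Finset E} {u w : V}
    (h : TransGen (G.Step T) u w) :
    ∃ l : List E, l ≠ [] ∧ (∀ e ∈ l, e ∈ T) ∧ l.IsChain (fun e f => G.tgt e = G.src f) ∧
      (∀ e ∈ l.head?, G.src e = w) ∧ ∀ e ∈ l.getLast?, G.tgt e = u := by
  induction h with
  | single h =>
    obtain ⟨e, he, hv, hu⟩ := h
    exact ⟨[e], by simp, by simpa using he, .singleton e, by simpa using hu, by simpa using hv⟩
  | tail _ h ih =>
    obtain ⟨f, hf, hv, hu⟩ := h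
    obtain ⟨l, hne, hT, hch, hhead, hlast⟩ := ih
    obtain ⟨e, l, rfl⟩ := List.exists_cons_of_ne_nil hne
    refine ⟨f :: e :: l, by simp, ?_, ?_, by simpa using hu, by simpa using hlast⟩
    · simpa [hf] using hT
    · exact List.isChain_cons_cons.2 ⟨by rw [hv, hhead e rfl], hch⟩

theorem exists_cycle_iff_exists_transGen (G : Multidigraph V E) (T : Finset E) :
    (∃ l : List E, l ≠ [] ∧ (∀ e ∈ l, e ∈ T) ∧
      l.IsChain (fun e f => G.tgt e = G.src f) ∧
      ∀ e₁ ∈ l.head?, ∀ e₂ ∈ l.getLast?, G.tgt e₂ = G.src e₁) ↔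
      ∃ v, TransGen (G.Step T) v v := by
  constructor
  · rintro ⟨_ | ⟨e, l⟩, hne, hT, hch, hcl⟩
    · exact absurd rfl hne
    refine ⟨_, TransGen.tail' (reflTransGen_step_of_isChain G e l hch hT)
      ⟨e, hT e (by simp), rfl, (hcl e rfl _ (List.getLast?_eq_some_getLast _)).symm⟩⟩
  · rintro ⟨v, hv⟩
    obtain ⟨l, hne, hT, hch, hhead, hlast⟩ := exists_isChain_of_transGen G hv
    exact ⟨l, hne, hT, hch, fun e₁ h₁ e₂ h₂ => by rw [hlast e₂ h₂, hhead e₁ h₁]⟩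

def InDegreeCondition [DecidableEq V] (G : Multidigraph V E) (r : V) (T : Finset E) : Prop :=
  (∀ v : V, v ≠ r → (T.filter (fun e => G.tgt e = v)).card = 1) ∧
  (T.filter (fun e => G.tgt e = r)).card = 0

namespace InDegreeCondition

variable [DecidableEq V] {G : Multidigraph V E} {r : V} {T : Finset E}

theorem tgt_ne (h : G.InDegreeCondition r T) {e : E} (he : e ∈ T) : G.tgt e ≠ r := by
  intro hr
  have : e ∈ T.filter (fun e => G.tgt e = r) := mem_filter.2 ⟨he, hr⟩
  simp [card_eq_zero.1 h.2] at this

theorem injOn_tgt (h : G.InDegreeCondition r T) : Set.InjOn G.tgt T := by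
  intro e he e' he' hee'
  exact card_le_one.1 (h.1 _ (h.tgt_ne he)).le e (mem_filter.2 ⟨he, rfl⟩) e'
    (mem_filter.2 ⟨he', hee'.symm⟩)

theorem exists_step (h : G.InDegreeCondition r T) {v : V} (hv : v ≠ r) : ∃ u, G.Step T v u := by
  obtain ⟨e, he⟩ := card_pos.1 (h.1 v hv ▸ Nat.one_pos)
  exact ⟨G.src e, e, (mem_filter.1 he).1, (mem_filter.1 he).2, rfl⟩

theorem not_step_root (h : G.InDegreeCondition r T) (u : V) : ¬ G.Step T r u :=
  fun ⟨_, he, hr, _⟩ => h.tgt_ne he hr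

theorem step_rightUnique (h : G.InDegreeCondition r T) : Relator.RightUnique (G.Step T) := by
  rintro v u u' ⟨e, he, rfl, rfl⟩ ⟨e', he', hv, rfl⟩
  rw [h.injOn_tgt he he' hv.symm]

end InDegreeCondition

variable [DecidableEq V] [Finite V]

theorem reflTransGen_step_iff_not_transGen {G : Multidigraph V E}
    {r : V} {T : Finset E} (h : G.InDegreeCondition r T) :
    (∀ v, ReflTransGen (G.Step T) v r) ↔ ∀ v, ¬ TransGen (G.Step T) v v := by
  constructor
  · intro hreach v hcyc
    -- a vertex on a cycle only steps to vertices on the same cycle, so it never reaches `r`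
    have hclosed : ∀ u u', TransGen (G.Step T) u u → G.Step T u u' →
        TransGen (G.Step T) u' u' := by
      intro u u' hu hstep
      obtain ⟨u'', hstep', hback⟩ := TransGen.head'_iff.1 hu
      rw [← h.step_rightUnique hstep hstep'] at hback
      exact TransGen.tail' hback hstep
    obtain ⟨u, hu, -⟩ := TransGen.head'_iff.1 ((hreach v).invariant hclosed hcyc)
    exact h.not_step_root u hu
  · intro hacyc
    by_contra! hbad
    refine (Finite.exists_transGen_self (s := {v | ¬ ReflTransGen (G.Step T) v r}) hbad ?_).elim
      hacyc
    intro v hv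
    obtain ⟨u, hu⟩ := h.exists_step fun hvr => hv (hvr ▸ .refl)
    exact ⟨u, fun hur => hv (hur.head hu), hu⟩

variable [Fintype E] [Fintype E']

theorem isOrientedSpanningTree_iff_s6
    (G : Multidigraph V E) (r : V) (T : Finset E) :
    IsOrientedSpanningTree G r T ↔
      G.InDegreeCondition r T ∧ ∀ v, ReflTransGen (G.Step T) v r := by
  rw [IsOrientedSpanningTree, ← and_assoc]
  exact and_congr_right fun h => (exists_cycle_iff_exists_transGen G T).not.trans <|
    not_exists.trans (reflTransGen_step_iff_not_transGen h).symm

theorem isOrientedSpanningTree_congr {G G' : Multidigraph V E} {T : Finset E}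
    (ht : G.tgt = G'.tgt) (hs : ∀ e ∈ T, G.src e = G'.src e) (r : V) :
    IsOrientedSpanningTree G r T ↔ IsOrientedSpanningTree G' r T := by
  have hstep : G.Step T = G'.Step T := by
    ext v u
    exact ⟨fun ⟨e, he, hv, hu⟩ => ⟨e, he, ht ▸ hv, hs e he ▸ hu⟩,
      fun ⟨e, he, hv, hu⟩ => ⟨e, he, ht ▸ hv, (hs e he).symm ▸ hu⟩⟩
  simp only [isOrientedSpanningTree_iff_s6, InDegreeCondition, ht, hstep]

theorem isOrientedSpanningTree_map_iff {G : Multidigraph V E} {K : Multidigraph V E'}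
    (φ : E' ↪ E) (hs : ∀ e, G.src (φ e) = K.src e) (ht : ∀ e, G.tgt (φ e) = K.tgt e)
    (r : V) (T : Finset E') :
    IsOrientedSpanningTree G r (T.map φ) ↔ IsOrientedSpanningTree K r T := by
  have hstep : G.Step (T.map φ) = K.Step T := by
    ext v u
    simp [Step, hs, ht]
  simp [isOrientedSpanningTree_iff_s6, InDegreeCondition, hstep, filter_map, ht]

theorem treeCount_eq_of_embedding (G : Multidigraph V E) (K : Multidigraph V E')
    (w : E → ℤ) (w' : E' → ℤ) (φ : E' ↪ E) (hs : ∀ e, G.src (φ e) = K.src e)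
    (ht : ∀ e, G.tgt (φ e) = K.tgt e) (hw : ∀ e, w (φ e) = w' e)
    (hw₀ : ∀ e ∉ Set.range φ, w e = 0) (r : V) :
    treeCount G w r = treeCount K w' r := by
  classical
  unfold treeCount
  rw [← sum_subset (subset_univ (univ.map (mapEmbedding φ).toEmbedding)), sum_map]
  · refine sum_congr rfl fun T _ => ?_
    simp [isOrientedSpanningTree_map_iff φ hs ht, prod_map, hw]
  · intro T _ hT
    obtain ⟨e, he, hφ⟩ : ∃ e ∈ T, e ∉ Set.range φ := by
      by_contra! hall
      obtain ⟨T', -, rfl⟩ := (subset_map_iff (f := φ) (s := T) (t := univ)).1 fun e he => by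
        obtain ⟨e', rfl⟩ := hall e he
        exact mem_map_of_mem φ (mem_univ e')
      exact hT (by simp)
    rw [prod_eq_zero he (hw₀ e hφ), ite_self]

end General

open Classical in
theorem treeCount_eq_sum_sum_disjSum {W F C : Type} [DecidableEq W] [Fintype F] [Fintype C]
    (H : Multidigraph W (F ⊕ C)) (w : F ⊕ C → ℤ) (r : W) :
    treeCount H w r = ∑ C₀ : Finset C, ∑ T : Finset F,
      if IsOrientedSpanningTree H r (T.disjSum C₀) then
        (∏ f ∈ T, w (.inl f)) * ∏ c ∈ C₀, w (.inr c) else 0 := by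
  unfold treeCount
  rw [Fintype.sum_equiv sumEquiv.toEquiv _
    (fun p => if IsOrientedSpanningTree H r (p.1.disjSum p.2) then ∏ e ∈ p.1.disjSum p.2, w e
      else 0)
    fun T => by simp only [RelIso.coe_fn_toEquiv, sumEquiv_apply_fst, sumEquiv_apply_snd,
      toLeft_disjSum_toRight]]
  rw [Fintype.sum_prod_type, sum_comm]
  simp only [prod_disjSum]

section Gadget

variable {V N F C : Type} [DecidableEq V] [DecidableEq N]

def project (H : Multidigraph (V ⊕ N) (F ⊕ C)) (p : N → V) : Multidigraph V F where
  src f := Sum.elim id p (H.src (.inl f))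
  tgt f := Sum.elim id p (H.tgt (.inl f))

def IsRetractingCore (H : Multidigraph (V ⊕ N) (F ⊕ C)) (τ : C → N) (C₀ : Finset C)
    (p : N → V) : Prop :=
  (∀ n, (C₀.filter (τ · = n)).card = 1) ∧
  (∀ c ∈ C₀, Sum.elim id p (H.src (.inr c)) = p (τ c)) ∧
  ∀ n, ReflTransGen (H.Step (C₀.map .inr)) (.inr n) (.inl (p n))

variable {H : Multidigraph (V ⊕ N) (F ⊕ C)} {τ : C → N} (hF : ∀ f, ∃ v, H.tgt (.inl f) = .inl v)
  (hτ : ∀ c, H.tgt (.inr c) = .inr (τ c))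
include hF hτ

theorem card_filter_tgt_inl (p : N → V) (T : Finset F) (C₀ : Finset C) (v : V) :
    ((T.disjSum C₀).filter (H.tgt · = .inl v)).card =
      (T.filter ((H.project p).tgt · = v)).card := by
  have hC₀ : C₀.filter ((H.tgt · = .inl v) ∘ .inr) = ∅ :=
    filter_false_of_mem fun c _ => by simp [hτ]
  rw [card_filter_disjSum, hC₀, card_empty, add_zero]
  congr 1
  refine filter_congr fun f _ => ?_
  obtain ⟨u, hu⟩ := hF f
  simp [project, hu]

theorem card_filter_tgt_inr (T : Finset F) (C₀ : Finset C) (n : N) :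
    ((T.disjSum C₀).filter (H.tgt · = .inr n)).card = (C₀.filter (τ · = n)).card := by
  rw [card_filter_disjSum, filter_false_of_mem fun f _ => by obtain ⟨u, hu⟩ := hF f; simp [hu],
    card_empty, zero_add]
  simp [hτ]

open Classical in
theorem sum_isOrientedSpanningTree_disjSum_eq_zero [Fintype F] [Fintype C] {C₀ : Finset C} {n : N}
    (hn : (C₀.filter (τ · = n)).card ≠ 1) (w : F ⊕ C → ℤ) (r : V) :
    ∑ T : Finset F, (if IsOrientedSpanningTree H (.inl r) (T.disjSum C₀) then
        (∏ f ∈ T, w (.inl f)) * ∏ c ∈ C₀, w (.inr c) else 0) = 0 := by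
  refine sum_eq_zero fun T _ => if_neg fun h => hn ?_
  rw [← card_filter_tgt_inr hF hτ T]
  exact h.1 _ Sum.inr_ne_inl

variable [Fintype F] [Fintype C] [Finite V] [Finite N]

theorem isOrientedSpanningTree_disjSum_iff {C₀ : Finset C} {p : N → V}
    (hC : H.IsRetractingCore τ C₀ p) (r : V) (T : Finset F) :
    IsOrientedSpanningTree H (.inl r) (T.disjSum C₀) ↔
      IsOrientedSpanningTree (H.project p) r T := by
  obtain ⟨hdeg, hsrc, hreach⟩ := hC
  have hι : ∀ x, ReflTransGen (H.Step (T.disjSum C₀)) x (.inl (Sum.elim id p x)) := by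
    rintro (v | n)
    · exact .refl
    · exact ReflTransGen.mono (fun _ _ => Step.mono (by simp [subset_iff])) _ _ (hreach n)
  rw [isOrientedSpanningTree_iff_s6, isOrientedSpanningTree_iff_s6]
  refine and_congr ?_ (Relation.reflTransGen_iff_of_retract .inl (Sum.elim id p) (fun _ => rfl)
    ?_ ?_ hι r)
  · simp [InDegreeCondition, Sum.forall, card_filter_tgt_inl hF hτ p,
      card_filter_tgt_inr hF hτ, hdeg]
  · rintro _ _ ⟨f | c, he, rfl, rfl⟩
    · exact .single ⟨f, by simpa using he, rfl, rfl⟩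
    · rw [hτ, Sum.elim_inr, hsrc c (by simpa using he)]
  · rintro _ _ ⟨f, hf, rfl, rfl⟩
    obtain ⟨v, hv⟩ := hF f
    refine .head ⟨.inl f, by simpa using hf, ?_, rfl⟩ (hι _)
    simp [project, hv]

open Classical in
theorem sum_isOrientedSpanningTree_disjSum {C₀ : Finset C} {p : N → V}
    (hC : H.IsRetractingCore τ C₀ p) (w : F ⊕ C → ℤ) (r : V) :
    ∑ T : Finset F, (if IsOrientedSpanningTree H (.inl r) (T.disjSum C₀) then
        (∏ f ∈ T, w (.inl f)) * ∏ c ∈ C₀, w (.inr c) else 0) =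
      (∏ c ∈ C₀, w (.inr c)) * treeCount (H.project p) (w ∘ .inl) r := by
  simp_rw [isOrientedSpanningTree_disjSum_iff hF hτ hC, treeCount, mul_sum]
  refine sum_congr rfl fun T _ => ?_
  split_ifs <;> simp [mul_comm]

theorem treeCount_eq_add_of_isRetractingCore {C₁ C₂ : Finset C} {p₁ p₂ : N → V}
    (hC₁ : H.IsRetractingCore τ C₁ p₁) (hC₂ : H.IsRetractingCore τ C₂ p₂) (hne : C₁ ≠ C₂)
    (hbad : ∀ C₀ : Finset C, C₀ ≠ C₁ → C₀ ≠ C₂ → ∃ n, (C₀.filter (τ · = n)).card ≠ 1)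
    (w : F ⊕ C → ℤ) (r : V) :
    treeCount H w (.inl r) =
      (∏ c ∈ C₁, w (.inr c)) * treeCount (H.project p₁) (w ∘ .inl) r +
        (∏ c ∈ C₂, w (.inr c)) * treeCount (H.project p₂) (w ∘ .inl) r := by
  classical
  rw [treeCount_eq_sum_sum_disjSum, ← sum_subset (subset_univ {C₁, C₂}), sum_pair hne,
    sum_isOrientedSpanningTree_disjSum hF hτ hC₁, sum_isOrientedSpanningTree_disjSum hF hτ hC₂]
  intro C₀ _ hC₀
  obtain ⟨n, hn⟩ := hbad C₀ (by simp_all) (by simp_all)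
  exact sum_isOrientedSpanningTree_disjSum_eq_zero hF hτ hn w r

end Gadget

end Multidigraph

namespace Skein

open Multidigraph

variable {V E : Type} (G : Multidigraph V E)
  (e₁ e₂ : E) (a b : V)

/-- `Γ_{x,y}`: `Γ` with `e₁` and `e₂` replaced by edges `x → b` and `y → a`. -/
def rewire (x y : V) : Multidigraph V ({e : E // e ≠ e₁ ∧ e ≠ e₂} ⊕ Fin 2) where
  src := Sum.elim (fun e => G.src e.1) ![x, y]
  tgt := Sum.elim (fun e => G.tgt e.1) ![b, a]

def rewireWeight (w : E → ℤ) (i j : ℤ) : {e : E // e ≠ e₁ ∧ e ≠ e₂} ⊕ Fin 2 → ℤ :=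
  Sum.elim (fun e => w e.1) ![i, j]

theorem treeCount_eq_treeCount_rewire [DecidableEq V] [Finite V] [Fintype E] [DecidableEq E]
    (w : E → ℤ) (i j : ℤ) {c d : V}
    (he : e₁ ≠ e₂) (h1s : G.src e₁ = c) (h1t : G.tgt e₁ = b) (h1w : w e₁ = i)
    (h2s : G.src e₂ = d) (h2t : G.tgt e₂ = a) (h2w : w e₂ = j) (r : V) :
    treeCount G w r = treeCount (rewire G e₁ e₂ a b c d) (rewireWeight e₁ e₂ w i j) r := by
  let φ : {e : E // e ≠ e₁ ∧ e ≠ e₂} ⊕ Fin 2 ↪ E :=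
    ⟨Sum.elim Subtype.val ![e₁, e₂], Subtype.val_injective.sumElim
      (fun (k k' : Fin 2) h => by
        fin_cases k <;> fin_cases k' <;> first | rfl | exact absurd h he | exact absurd h.symm he)
      fun e k => by fin_cases k; exacts [e.2.1, e.2.2]⟩
  refine treeCount_eq_of_embedding G _ w _ φ ?_ ?_ ?_ ?_ r
  · rintro (e | k)
    · rfl
    · fin_cases k; exacts [h1s, h2s]
  · rintro (e | k)
    · rfl
    · fin_cases k; exacts [h1t, h2t]
  · rintro (e | k)
    · rfl
    · fin_cases k; exacts [h1w, h2w]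
  · intro e he'
    refine absurd ?_ he'
    by_cases h1 : e = e₁
    · exact ⟨.inr 0, h1.symm⟩
    by_cases h2 : e = e₂
    · exact ⟨.inr 1, h2.symm⟩
    exact ⟨.inl ⟨e, h1, h2⟩, rfl⟩

def oldStep (T : Finset ({e : E // e ≠ e₁ ∧ e ≠ e₂} ⊕ Fin 2)) (v u : V) : Prop :=
  ∃ e, Sum.inl e ∈ T ∧ G.tgt e.1 = v ∧ G.src e.1 = u

variable {G e₁ e₂ a b} {T : Finset ({e : E // e ≠ e₁ ∧ e ≠ e₂} ⊕ Fin 2)} {r x y : V}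

theorem step_rewire (h₀ : .inr 0 ∈ T) (h₁ : .inr 1 ∈ T) :
    (rewire G e₁ e₂ a b x y).Step T = addArcs (oldStep G e₁ e₂ T) b x a y := by
  ext v u
  constructor
  · rintro ⟨e | k, he, rfl, rfl⟩
    · exact .inl ⟨e, he, rfl, rfl⟩
    · fin_cases k
      exacts [.inr (.inl ⟨rfl, rfl⟩), .inr (.inr ⟨rfl, rfl⟩)]
  · rintro (⟨e, he, rfl, rfl⟩ | ⟨rfl, rfl⟩ | ⟨rfl, rfl⟩)
    exacts [⟨.inl e, he, rfl, rfl⟩, ⟨.inr 0, h₀, rfl, rfl⟩, ⟨.inr 1, h₁, rfl, rfl⟩]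

section InDegree

variable [DecidableEq V] (h : (rewire G e₁ e₂ a b x y).InDegreeCondition r T)
include h

theorem rightUnique_oldStep : Relator.RightUnique (oldStep G e₁ e₂ T) := by
  rintro _ _ _ ⟨e, he, rfl, rfl⟩ ⟨e', he', hee', rfl⟩
  cases h.injOn_tgt he he' hee'.symm
  rfl

theorem not_oldStep_root (u : V) : ¬ oldStep G e₁ e₂ T r u :=
  fun ⟨_, he, hr, _⟩ => h.tgt_ne he hr

theorem not_oldStep_tgt_inr {k : Fin 2} (hk : .inr k ∈ T) (u : V) :
    ¬ oldStep G e₁ e₂ T ((rewire G e₁ e₂ a b x y).tgt (.inr k)) u :=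
  fun ⟨_, he, hk', _⟩ => Sum.inl_ne_inr (h.injOn_tgt he hk hk')

end InDegree

section Exchange

variable [DecidableEq V] [Finite V] [Fintype E] [DecidableEq E]

theorem isOrientedSpanningTree_rewire_iff (hab : a ≠ b) (h₀ : .inr 0 ∈ T)
    (h₁ : .inr 1 ∈ T) :
    IsOrientedSpanningTree (rewire G e₁ e₂ a b x y) r T ↔
      (rewire G e₁ e₂ a b x y).InDegreeCondition r T ∧
      (∀ v, ReflTransGen (oldStep G e₁ e₂ T) v r ∨ ReflTransGen (oldStep G e₁ e₂ T) v a ∨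
        ReflTransGen (oldStep G e₁ e₂ T) v b) ∧
      ((ReflTransGen (oldStep G e₁ e₂ T) x r ∧ ¬ ReflTransGen (oldStep G e₁ e₂ T) y a) ∨
        (ReflTransGen (oldStep G e₁ e₂ T) x a ∧ ReflTransGen (oldStep G e₁ e₂ T) y r)) := by
  rw [isOrientedSpanningTree_iff_s6, step_rewire h₀ h₁]
  exact and_congr_right fun (h : (rewire G e₁ e₂ a b x y).InDegreeCondition r T) =>
    forall_reflTransGen_addArcs_iff (rightUnique_oldStep h) (not_oldStep_root h)
      (not_oldStep_tgt_inr h h₁) (not_oldStep_tgt_inr h h₀) hab (h.tgt_ne h₁) (h.tgt_ne h₀)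

theorem isOrientedSpanningTree_rewire_congr {x' y' : V} (hx : .inr 0 ∈ T → x = x')
    (hy : .inr 1 ∈ T → y = y') :
    IsOrientedSpanningTree (rewire G e₁ e₂ a b x y) r T ↔
      IsOrientedSpanningTree (rewire G e₁ e₂ a b x' y') r T := by
  refine isOrientedSpanningTree_congr (G := rewire G e₁ e₂ a b x y)
    (G' := rewire G e₁ e₂ a b x' y') rfl ?_ r
  rintro (e | k) he
  · rfl
  · fin_cases k
    exacts [hx he, hy he]

open Classical in
theorem ite_isOrientedSpanningTree_rewire_add (hab : a ≠ b) (c d : V) (m : ℤ) :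
    (if IsOrientedSpanningTree (rewire G e₁ e₂ a b c d) r T then m else 0) +
        (if IsOrientedSpanningTree (rewire G e₁ e₂ a b d c) r T then m else 0) =
      (if IsOrientedSpanningTree (rewire G e₁ e₂ a b c c) r T then m else 0) +
        (if IsOrientedSpanningTree (rewire G e₁ e₂ a b d d) r T then m else 0) := by
  by_cases h₀ : .inr 0 ∈ T
  swap
  · have hx : ∀ x y, IsOrientedSpanningTree (rewire G e₁ e₂ a b x y) r T ↔
        IsOrientedSpanningTree (rewire G e₁ e₂ a b d y) r T :=
      fun _ _ => isOrientedSpanningTree_rewire_congr (fun h => absurd h h₀) fun _ => rfl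
    rw [if_congr (hx c d) rfl rfl, if_congr (hx c c) rfl rfl, add_comm]
  by_cases h₁ : .inr 1 ∈ T
  swap
  · have hy : ∀ x y, IsOrientedSpanningTree (rewire G e₁ e₂ a b x y) r T ↔
        IsOrientedSpanningTree (rewire G e₁ e₂ a b x x) r T :=
      fun _ _ => isOrientedSpanningTree_rewire_congr (fun _ => rfl) fun h => absurd h h₁
    rw [if_congr (hy c d) rfl rfl, if_congr (hy d c) rfl rfl]
  by_cases hD : (rewire G e₁ e₂ a b c c).InDegreeCondition r T
  swap
  · have hno : ∀ x y, ¬ IsOrientedSpanningTree (rewire G e₁ e₂ a b x y) r T :=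
      fun _ _ h => hD ((isOrientedSpanningTree_iff_s6 _ _ _).1 h).1
    simp only [hno, if_false]
  have htree := fun x y => (isOrientedSpanningTree_rewire_iff (x := x) (y := y) hab h₀ h₁).trans
    (and_iff_right hD)
  have hunique := fun v => not_reflTransGen_and_of_terminal (t' := a) (rightUnique_oldStep hD)
    (not_oldStep_root hD) (not_oldStep_tgt_inr hD h₁) (hD.tgt_ne h₁).symm v
  have hc := hunique c
  have hd := hunique d
  simp only [htree]
  apply ite_add_ite_eq_of_iff <;> tauto

theorem treeCount_rewire_add (hab : a ≠ b) (c d : V) (ρ : {e : E // e ≠ e₁ ∧ e ≠ e₂} ⊕ Fin 2 → ℤ) :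
    treeCount (rewire G e₁ e₂ a b c d) ρ r + treeCount (rewire G e₁ e₂ a b d c) ρ r =
      treeCount (rewire G e₁ e₂ a b c c) ρ r + treeCount (rewire G e₁ e₂ a b d d) ρ r := by
  simp only [treeCount, ← sum_add_distrib]
  exact sum_congr rfl fun T _ => ite_isOrientedSpanningTree_rewire_add hab c d _

end Exchange

section Gadgets

variable (G : Multidigraph V E) (e₁ e₂ : E) (a b c d : V)

/-- The common shape of `Γ₁` and `Γ₂`: besides the other edges of `Γ`, the edges `σ 0 → b`,
`σ 1 → a` and the core edges `c → v_{τ 0}`, `d → v_{τ 1}`, `v₁ → v_{τ 2}`, where `v₁ = inr 0`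
and `v₂ = inr 1`. -/
def gadget (σ : Fin 2 → V ⊕ Fin 2) (τ : Fin 3 → Fin 2) :
    Multidigraph (V ⊕ Fin 2) (({e : E // e ≠ e₁ ∧ e ≠ e₂} ⊕ Fin 2) ⊕ Fin 3) where
  src := Sum.elim (Sum.elim (fun e => .inl (G.src e.1)) σ) ![.inl c, .inl d, .inr 0]
  tgt := Sum.elim (Sum.elim (fun e => .inl (G.tgt e.1)) ![.inl b, .inl a]) (.inr ∘ τ)

variable (σ : Fin 2 → V ⊕ Fin 2) (τ : Fin 3 → Fin 2)

theorem gadget_tgt_inl (f : {e : E // e ≠ e₁ ∧ e ≠ e₂} ⊕ Fin 2) :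
    ∃ v, (gadget G e₁ e₂ a b c d σ τ).tgt (.inl f) = .inl v := by
  rcases f with e | k
  · exact ⟨_, rfl⟩
  · fin_cases k
    exacts [⟨b, rfl⟩, ⟨a, rfl⟩]

theorem project_gadget (p : Fin 2 → V) :
    (gadget G e₁ e₂ a b c d σ τ).project p =
      rewire G e₁ e₂ a b (Sum.elim id p (σ 0)) (Sum.elim id p (σ 1)) := by
  simp only [project, gadget, rewire, Multidigraph.mk.injEq]
  constructor <;> funext f <;> rcases f with e | k
  all_goals first | rfl | (fin_cases k <;> rfl)

variable [DecidableEq V] [Finite V] [Fintype E] [DecidableEq E] (w : E → ℤ) (i j : ℤ) (r : V)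

theorem treeCount_gamma2_eq_gadget :
    treeCount (Gamma2 G e₁ e₂ a b c d) (weight2 w e₁ e₂ i j) (.inl r) =
      treeCount (gadget G e₁ e₂ a b c d ![.inr 1, .inr 1] ![0, 0, 1])
        (Sum.elim (rewireWeight e₁ e₂ w i j) ![i, j, i + j]) (.inl r) := by
  let φ : {e : E // e ≠ e₁ ∧ e ≠ e₂} ⊕ Fin 5 ↪ ({e : E // e ≠ e₁ ∧ e ≠ e₂} ⊕ Fin 2) ⊕ Fin 3 :=
    ⟨Sum.elim (.inl ∘ .inl) ![.inr 0, .inr 1, .inr 2, .inl (.inr 1), .inl (.inr 0)],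
      (Sum.inl_injective.comp Sum.inl_injective).sumElim
        (fun k k' h => by fin_cases k <;> fin_cases k' <;> first | rfl | simp at h)
        fun e k => by fin_cases k <;> simp⟩
  refine (treeCount_eq_of_embedding _ _ _ _ φ ?_ ?_ ?_ ?_ _).symm
  · rintro (e | k)
    · rfl
    · fin_cases k <;> rfl
  · rintro (e | k)
    · rfl
    · fin_cases k <;> rfl
  · rintro (e | k)
    · rfl
    · fin_cases k <;> rfl
  · rintro ((e | k) | k) hφ <;> refine absurd ?_ hφ
    · exact ⟨.inl e, rfl⟩
    · fin_cases k
      exacts [⟨.inr 4, rfl⟩, ⟨.inr 3, rfl⟩]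
    · fin_cases k
      exacts [⟨.inr 0, rfl⟩, ⟨.inr 1, rfl⟩, ⟨.inr 2, rfl⟩]

theorem treeCount_gamma2 :
    treeCount (Gamma2 G e₁ e₂ a b c d) (weight2 w e₁ e₂ i j) (.inl r) =
      i * (i + j) * treeCount (rewire G e₁ e₂ a b c c) (rewireWeight e₁ e₂ w i j) r +
        j * (i + j) * treeCount (rewire G e₁ e₂ a b d d) (rewireWeight e₁ e₂ w i j) r := by
  have hC₁ : (gadget G e₁ e₂ a b c d ![.inr 1, .inr 1] ![0, 0, 1]).IsRetractingCore ![0, 0, 1]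
      {0, 2} fun _ => c := by
    refine ⟨by decide, fun k hk => by fin_cases k <;> first | rfl | simp at hk, fun n => ?_⟩
    fin_cases n
    · exact .single ⟨.inr 0, by simp, rfl, rfl⟩
    · exact .head ⟨.inr 2, by simp, rfl, rfl⟩ (.single ⟨.inr 0, by simp, rfl, rfl⟩)
  have hC₂ : (gadget G e₁ e₂ a b c d ![.inr 1, .inr 1] ![0, 0, 1]).IsRetractingCore ![0, 0, 1]
      {1, 2} fun _ => d := by
    refine ⟨by decide, fun k hk => by fin_cases k <;> first | rfl | simp at hk, fun n => ?_⟩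
    fin_cases n
    · exact .single ⟨.inr 1, by simp, rfl, rfl⟩
    · exact .head ⟨.inr 2, by simp, rfl, rfl⟩ (.single ⟨.inr 1, by simp, rfl, rfl⟩)
  rw [treeCount_gamma2_eq_gadget, treeCount_eq_add_of_isRetractingCore
    (gadget_tgt_inl G e₁ e₂ a b c d _ _) (fun _ => rfl) hC₁ hC₂ (by decide) (by decide),
    project_gadget, project_gadget, prod_pair (by decide), prod_pair (by decide)]
  rfl

theorem treeCount_gamma1_eq_gadget :
    treeCount (Gamma1 G e₁ e₂ a b c d i j) (weight1 w e₁ e₂ i j) (.inl r) =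
      treeCount (gadget G e₁ e₂ a b c d ![.inr 0, .inr 1] ![1, 0, 1])
        (Sum.elim (rewireWeight e₁ e₂ w i j) ![i, j, j - i]) (.inl r) := by
  let φ : {e : E // e ≠ e₁ ∧ e ≠ e₂} ⊕ (Fin 4 ⊕ {u : Unit // i ≠ j}) ↪
      ({e : E // e ≠ e₁ ∧ e ≠ e₂} ⊕ Fin 2) ⊕ Fin 3 :=
    ⟨Sum.elim (.inl ∘ .inl) (Sum.elim ![.inr 0, .inl (.inr 1), .inr 1, .inl (.inr 0)]
      fun _ => .inr 2),
      (Sum.inl_injective.comp Sum.inl_injective).sumElim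
        (Function.Injective.sumElim
          (fun (k k' : Fin 4) h => by fin_cases k <;> fin_cases k' <;> first | rfl | simp at h)
          (fun u u' _ => Subsingleton.elim u u') fun k _ => by fin_cases k <;> simp)
        fun e k => by rcases k with k | _ <;> [fin_cases k <;> simp; simp]⟩
  refine (treeCount_eq_of_embedding _ _ _ _ φ ?_ ?_ ?_ ?_ _).symm
  · rintro (e | k | u)
    · rfl
    · fin_cases k <;> rfl
    · rfl
  · rintro (e | k | u)
    · rfl
    · fin_cases k <;> rfl
    · rfl
  · rintro (e | k | u)
    · rfl
    · fin_cases k <;> rfl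
    · rfl
  -- the edge `v₁ → v₂` is missing from `Γ₁` exactly when its weight `j - i` vanishes
  · rintro ((e | k) | k) hφ
    · exact absurd ⟨.inl e, rfl⟩ hφ
    · fin_cases k
      exacts [absurd ⟨.inr (.inl 3), rfl⟩ hφ, absurd ⟨.inr (.inl 1), rfl⟩ hφ]
    · fin_cases k
      · exact absurd ⟨.inr (.inl 0), rfl⟩ hφ
      · exact absurd ⟨.inr (.inl 2), rfl⟩ hφ
      · show j - i = 0
        by_contra hij
        exact hφ ⟨.inr (.inr ⟨(), (sub_ne_zero.1 hij).symm⟩), rfl⟩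

theorem treeCount_gamma1 :
    treeCount (Gamma1 G e₁ e₂ a b c d i j) (weight1 w e₁ e₂ i j) (.inl r) =
      i * j * treeCount (rewire G e₁ e₂ a b d c) (rewireWeight e₁ e₂ w i j) r +
        j * (j - i) * treeCount (rewire G e₁ e₂ a b d d) (rewireWeight e₁ e₂ w i j) r := by
  have hC₁ : (gadget G e₁ e₂ a b c d ![.inr 0, .inr 1] ![1, 0, 1]).IsRetractingCore ![1, 0, 1]
      {0, 1} ![d, c] := by
    refine ⟨by decide, fun k hk => by fin_cases k <;> first | rfl | simp at hk, fun n => ?_⟩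
    fin_cases n
    · exact .single ⟨.inr 1, by simp, rfl, rfl⟩
    · exact .single ⟨.inr 0, by simp, rfl, rfl⟩
  have hC₂ : (gadget G e₁ e₂ a b c d ![.inr 0, .inr 1] ![1, 0, 1]).IsRetractingCore ![1, 0, 1]
      {1, 2} fun _ => d := by
    refine ⟨by decide, fun k hk => by fin_cases k <;> first | rfl | simp at hk, fun n => ?_⟩
    fin_cases n
    · exact .single ⟨.inr 1, by simp, rfl, rfl⟩
    · exact .head ⟨.inr 2, by simp, rfl, rfl⟩ (.single ⟨.inr 1, by simp, rfl, rfl⟩)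
  rw [treeCount_gamma1_eq_gadget, treeCount_eq_add_of_isRetractingCore
    (gadget_tgt_inl G e₁ e₂ a b c d _ _) (fun _ => rfl) hC₁ hC₂ (by decide) (by decide),
    project_gadget, project_gadget, prod_pair (by decide), prod_pair (by decide)]
  rfl

end Gadgets

end Skein

theorem skein_relation_le_general {V E : Type} [Fintype V] [Fintype E] [DecidableEq V] [DecidableEq E]
    (G : Multidigraph V E) (w : E → ℤ)
    (i j : ℤ)
    (a b c d : V)
    (hab : a ≠ b)
    (e₁ e₂ : E) (he : e₁ ≠ e₂)
    (h1s : G.src e₁ = c) (h1t : G.tgt e₁ = b) (h1w : w e₁ = i)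
    (h2s : G.src e₂ = d) (h2t : G.tgt e₂ = a) (h2w : w e₂ = j)
    (r : V) :
    i * j * (i + j) * treeCount G w r
      = -(i + j) * treeCount (Gamma1 G e₁ e₂ a b c d i j) (weight1 w e₁ e₂ i j) (Sum.inl r)
        + j * treeCount (Gamma2 G e₁ e₂ a b c d) (weight2 w e₁ e₂ i j) (Sum.inl r) := by
  rw [Skein.treeCount_eq_treeCount_rewire G e₁ e₂ a b w i j he h1s h1t h1w h2s h2t h2w,
    Skein.treeCount_gamma1, Skein.treeCount_gamma2]
  linear_combination i * j * (i + j) *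
    Skein.treeCount_rewire_add (r := r) hab c d (Skein.rewireWeight e₁ e₂ w i j)

/-- **Skein relation, case `i ≤ j`.** For a finite connected directed multigraph `Γ`
with a positive balanced weight, distinct vertices `a, b, c, d`, and distinguished
edges `e₁ : c → b` of weight `i` and `e₂ : d → a` of weight `j` with `i ≤ j`,
the weighted numbers of oriented spanning trees rooted at any vertex `r` of `Γ`
satisfy `i·j·(i+j)·N(Γ, r) = -(i+j)·N(Γ₁, r) + j·N(Γ₂, r)`. -/
theorem skein_relation_le {V E : Type} [Fintype V] [Fintype E] [DecidableEq V] [DecidableEq E]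
    (G : Multidigraph V E) (w : E → ℤ)
    (hconn : MConnected G) (hbal : IsBalanced G w) (hpos : ∀ e, 0 < w e)
    (i j : ℤ) (hi : 0 < i) (hj : 0 < j) (hij : i ≤ j)
    (a b c d : V)
    (hab : a ≠ b) (hac : a ≠ c) (had : a ≠ d) (hbc : b ≠ c) (hbd : b ≠ d) (hcd : c ≠ d)
    (e₁ e₂ : E) (he : e₁ ≠ e₂)
    (h1s : G.src e₁ = c) (h1t : G.tgt e₁ = b) (h1w : w e₁ = i)
    (h2s : G.src e₂ = d) (h2t : G.tgt e₂ = a) (h2w : w e₂ = j)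
    (r : V) :
    i * j * (i + j) * treeCount G w r
      = -(i + j) * treeCount (Gamma1 G e₁ e₂ a b c d i j) (weight1 w e₁ e₂ i j) (Sum.inl r)
        + j * treeCount (Gamma2 G e₁ e₂ a b c d) (weight2 w e₁ e₂ i j) (Sum.inl r) :=
  skein_relation_le_general G w i j a b c d hab e₁ e₂ he h1s h1t h1w h2s h2t h2w r
end

section
/- Let Γ be a finite directed multigraph that is connected as an undirected graph and carries a positive balanced weight c (for every vertex v, the sum of the weights of edges pointing into v equals the sum of the weights of edges pointing out of v, and every edge weight is a positive integer). Then Γ is strongly connected: for every ordered pair of vertices (u, v), there is a directed path from u to v. -/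
/-- A weight is balanced if at each vertex the incoming and outgoing weights agree. -/
def IsBalancedNat {V E : Type} [Fintype E] [DecidableEq V]
    (G : Multidigraph V E) (c : E → ℕ) : Prop :=
  ∀ v : V, ∑ e ∈ Finset.univ.filter (fun e => G.tgt e = v), c e
         = ∑ e ∈ Finset.univ.filter (fun e => G.src e = v), c e

/-- A finite directed multigraph that is connected as an undirected graph and
carries a positive balanced weight is strongly connected: every vertex is
reachable from every other vertex by a directed path. -/
theorem strongly_connected_of_balanced {V E : Type} [Fintype V] [Fintype E] [DecidableEq V]
    (G : Multidigraph V E) (c : E → ℕ)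
    (hconn : MConnected G) (hbal : IsBalancedNat G c) (hpos : ∀ e, 0 < c e) :
    ∀ u v : V, Relation.ReflTransGen (fun x y => ∃ e : E, G.src e = x ∧ G.tgt e = y) u v := by
  classical
  set R : V → V → Prop := fun x y => ∃ e : E, G.src e = x ∧ G.tgt e = y with hR
  have key : ∀ e : E, Relation.ReflTransGen R (G.tgt e) (G.src e) := by
    intro e0
    set T : Finset V := Finset.univ.filter
      (fun v => Relation.ReflTransGen R (G.tgt e0) v) with hT
    have hmemT : ∀ v, v ∈ T ↔ Relation.ReflTransGen R (G.tgt e0) v := by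
      intro v; simp [hT]
    have hclosed : ∀ e : E, G.src e ∈ T → G.tgt e ∈ T := by
      intro e he
      rw [hmemT] at he ⊢
      exact he.tail ⟨e, rfl, rfl⟩
    set A := Finset.univ.filter (fun e : E => G.tgt e ∈ T) with hA
    set B := Finset.univ.filter (fun e : E => G.src e ∈ T) with hB
    have hBA : B ⊆ A := by
      intro e he
      simp only [hA, hB, Finset.mem_filter, Finset.mem_univ, true_and] at he ⊢
      exact hclosed e he
    have hsumA : ∑ v ∈ T, ∑ e ∈ Finset.univ.filter (fun e => G.tgt e = v), c e
        = ∑ e ∈ A, c e := by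
      have h1 : ∑ v ∈ T, ∑ e ∈ A.filter (fun e => G.tgt e = v), c e = ∑ e ∈ A, c e :=
        Finset.sum_fiberwise_of_maps_to
          (fun e he => by
            simp only [hA, Finset.mem_filter, Finset.mem_univ, true_and] at he
            exact he) c
      rw [← h1]
      refine Finset.sum_congr rfl fun v hv => ?_
      congr 1
      ext e
      simp only [hA, Finset.filter_filter, Finset.mem_filter, Finset.mem_univ, true_and]
      exact ⟨fun h => ⟨h ▸ hv, h⟩, fun h => h.2⟩
    have hsumB : ∑ v ∈ T, ∑ e ∈ Finset.univ.filter (fun e => G.src e = v), c e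
        = ∑ e ∈ B, c e := by
      have h1 : ∑ v ∈ T, ∑ e ∈ B.filter (fun e => G.src e = v), c e = ∑ e ∈ B, c e :=
        Finset.sum_fiberwise_of_maps_to
          (fun e he => by
            simp only [hB, Finset.mem_filter, Finset.mem_univ, true_and] at he
            exact he) c
      rw [← h1]
      refine Finset.sum_congr rfl fun v hv => ?_
      congr 1
      ext e
      simp only [hB, Finset.filter_filter, Finset.mem_filter, Finset.mem_univ, true_and]
      exact ⟨fun h => ⟨h ▸ hv, h⟩, fun h => h.2⟩
    have hsum : ∑ e ∈ A, c e = ∑ e ∈ B, c e := by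
      rw [← hsumA, ← hsumB]
      exact Finset.sum_congr rfl fun v _ => hbal v
    have he0A : e0 ∈ A := by
      simp only [hA, Finset.mem_filter, Finset.mem_univ, true_and]
      rw [hmemT]
    have he0B : e0 ∈ B := by
      by_contra he0B
      have hlt : ∑ e ∈ B, c e < ∑ e ∈ A, c e :=
        Finset.sum_lt_sum_of_subset hBA he0A he0B (hpos e0)
          (fun _ _ _ => Nat.zero_le _)
      omega
    simp only [hB, Finset.mem_filter, Finset.mem_univ, true_and] at he0B
    exact (hmemT _).mp he0B
  intro u v
  induction hconn u v with
  | refl => exact Relation.ReflTransGen.refl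
  | tail _ hedge ih =>
    obtain ⟨e, h | h⟩ := hedge
    · exact ih.tail ⟨e, h⟩
    · have hk := key e
      rw [h.1, h.2] at hk
      exact ih.trans hk
end

section
/- Let g be a finite directed multigraph that is connected as an undirected graph and carries a positive balanced weight c (for every vertex v, the sum of the weights of edges pointing into v equals the sum of the weights of edges pointing out of v, and every edge weight is a positive integer). Then for every vertex r of g, the weighted number of oriented spanning trees N(g, c, r) is strictly positive. -/
open Classical in
/-- The weighted number `N(g, c, r)` of oriented spanning trees rooted at `r`,
for a natural-number weight `c`. -/
noncomputable def treeCountNat {V E : Type} [Fintype E] [DecidableEq V]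
    (G : Multidigraph V E) (c : E → ℕ) (r : V) : ℕ :=
  ∑ T : Finset E, if IsOrientedSpanningTree G r T then ∏ e ∈ T, c e else 0

/-!
Balance makes every set of vertices that is closed under outgoing edges closed under incoming
edges too: the edges leaving the set are among those entering it, both carry the same total
weight, and all weights are positive. Hence the vertices reachable from `r` by directed walks
form a set closed in both directions, which by connectivity is everything. Choosing for each
`v ≠ r` an edge into `v` from a vertex strictly closer to `r` gives an oriented spanning tree
(the distance to `r` increases along its edges, so it has no oriented cycle), and its weight is
positive.
-/

open Finset

theorem MConnected.forall_of_closed {V E : Type} {G : Multidigraph V E} (hconn : MConnected G)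
    {P : V → Prop} {r : V} (hr : P r) (hfwd : ∀ e, P (G.src e) → P (G.tgt e))
    (hbwd : ∀ e, P (G.tgt e) → P (G.src e)) (v : V) : P v := by
  induction hconn r v with
  | refl => exact hr
  | tail _ hstep ih =>
    obtain ⟨e, ⟨rfl, rfl⟩ | ⟨rfl, rfl⟩⟩ := hstep
    · exact hfwd e ih
    · exact hbwd e ih

section Balanced

variable {V E : Type} [Fintype E] [DecidableEq V] {G : Multidigraph V E} {c : E → ℕ}

theorem IsBalancedNat.sum_tgt_mem_eq_sum_src_mem (hbal : IsBalancedNat G c) (S : Finset V) :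
    ∑ e ∈ univ.filter (fun e => G.tgt e ∈ S), c e
      = ∑ e ∈ univ.filter (fun e => G.src e ∈ S), c e := by
  rw [← sum_fiberwise_eq_sum_filter, ← sum_fiberwise_eq_sum_filter]
  exact sum_congr rfl fun v _ => hbal v

theorem IsBalancedNat.src_mem_of_tgt_mem (hbal : IsBalancedNat G c) (hpos : ∀ e, 0 < c e)
    {S : Finset V} (hS : ∀ e, G.src e ∈ S → G.tgt e ∈ S) {e : E} (he : G.tgt e ∈ S) :
    G.src e ∈ S := by
  by_contra hne
  have hlt : ∑ e ∈ univ.filter (fun e => G.src e ∈ S), c e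
      < ∑ e ∈ univ.filter (fun e => G.tgt e ∈ S), c e :=
    sum_lt_sum_of_subset (fun e he => by simp_all) (by simpa using he) (by simpa using hne)
      (hpos e) fun _ _ _ => Nat.zero_le _
  exact hlt.ne' (hbal.sum_tgt_mem_eq_sum_src_mem S)

end Balanced

namespace Multidigraph

variable {V E : Type} (G : Multidigraph V E)

def ReachIn (r : V) : ℕ → V → Prop
  | 0, v => v = r
  | n + 1, v => ∃ e, G.tgt e = v ∧ ReachIn r n (G.src e)

theorem exists_reachIn_of_isBalancedNat [Fintype V] [Fintype E] [DecidableEq V] {c : E → ℕ}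
    (hconn : MConnected G) (hbal : IsBalancedNat G c) (hpos : ∀ e, 0 < c e) (r v : V) :
    ∃ n, G.ReachIn r n v := by
  classical
  let S := univ.filter fun v => ∃ n, G.ReachIn r n v
  have hfwd : ∀ e, G.src e ∈ S → G.tgt e ∈ S := by
    simp only [S, mem_filter, mem_univ, true_and]
    exact fun e ⟨n, hn⟩ => ⟨n + 1, e, rfl, hn⟩
  have hr : r ∈ S := by simpa [S] using ⟨0, rfl⟩
  simpa [S] using hconn.forall_of_closed hr hfwd (fun _ => hbal.src_mem_of_tgt_mem hpos hfwd) v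

theorem exists_potential_of_reachIn {r : V} (h : ∀ v, ∃ n, G.ReachIn r n v) :
    ∃ d : V → ℕ, ∀ v ≠ r, ∃ e, G.tgt e = v ∧ d (G.src e) < d v := by
  classical
  refine ⟨fun v => Nat.find (h v), fun v hv => ?_⟩
  obtain ⟨n, hn⟩ : ∃ n, Nat.find (h v) = n + 1 :=
    Nat.exists_eq_succ_of_ne_zero fun h0 => hv (by simpa [h0, ReachIn] using Nat.find_spec (h v))
  obtain ⟨e, he, hsrc⟩ : G.ReachIn r (n + 1) v := hn ▸ Nat.find_spec (h v)
  refine ⟨e, he, ?_⟩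
  simp only [hn]
  exact Nat.lt_succ_of_le (Nat.find_min' _ hsrc)

theorem not_exists_closed_chain_of_lt {T : Finset E} (d : V → ℕ)
    (hd : ∀ e ∈ T, d (G.src e) < d (G.tgt e)) :
    ¬ ∃ l : List E, l ≠ [] ∧ (∀ e ∈ l, e ∈ T) ∧
      l.IsChain (fun e f => G.tgt e = G.src f) ∧
      ∀ e₁ ∈ l.head?, ∀ e₂ ∈ l.getLast?, G.tgt e₂ = G.src e₁ := by
  rintro ⟨_ | ⟨a, l⟩, hne, hT, hchain, hclosed⟩
  · exact hne rfl
  have hmono : (a :: l).Pairwise fun e f => d (G.src e) < d (G.src f) := by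
    rw [← List.pairwise_map (f := fun e => d (G.src e)), ← List.isChain_iff_pairwise,
      List.isChain_map]
    exact hchain.imp_of_mem_imp fun e f he _ (hef : G.tgt e = G.src f) => hef ▸ hd e (hT e he)
  set b := (a :: l).getLast hne
  have hb : b ∈ a :: l := List.getLast_mem hne
  have hab : d (G.src a) ≤ d (G.src b) := by
    rcases List.mem_cons.1 hb with h | h
    · rw [h]
    · exact (List.rel_of_pairwise_cons hmono h).le
  have hba : G.tgt b = G.src a := hclosed a rfl b (List.getLast?_eq_some_getLast hne)
  have hlt := hd b (hT b hb)
  rw [hba] at hlt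
  omega

theorem exists_isOrientedSpanningTree_of_potential [Fintype V] [Fintype E] [DecidableEq V]
    {r : V} (d : V → ℕ) (hd : ∀ v ≠ r, ∃ e, G.tgt e = v ∧ d (G.src e) < d v) :
    ∃ T, IsOrientedSpanningTree G r T := by
  classical
  choose p hp_tgt hp_lt using hd
  let T : Finset E := univ.image fun v : {v // v ≠ r} => p v v.2
  have hmemT : ∀ e ∈ T, ∃ v hv, p v hv = e := by
    simp only [T, mem_image, mem_univ, true_and, Subtype.exists]
    exact fun _ h => h
  refine ⟨T, fun v hv => ?_, ?_, ?_⟩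
  · suffices T.filter (fun e => G.tgt e = v) = {p v hv} by rw [this, card_singleton]
    ext e
    simp only [mem_filter, mem_singleton]
    constructor
    · rintro ⟨heT, rfl⟩
      obtain ⟨w, hw, rfl⟩ := hmemT e heT
      simp only [hp_tgt]
    · rintro rfl
      exact ⟨mem_image_of_mem _ (mem_univ (⟨v, hv⟩ : {v // v ≠ r})), hp_tgt v hv⟩
  · refine card_eq_zero.2 (filter_eq_empty_iff.2 fun e he => ?_)
    obtain ⟨w, hw, rfl⟩ := hmemT e he
    rwa [hp_tgt]
  · refine G.not_exists_closed_chain_of_lt d fun e he => ?_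
    obtain ⟨w, hw, rfl⟩ := hmemT e he
    rw [hp_tgt]
    exact hp_lt w hw

end Multidigraph

/-- For a finite directed multigraph that is connected as an undirected graph and
carries a positive balanced weight, the weighted number of oriented spanning trees
rooted at any vertex is strictly positive. -/
theorem treeCountNat_pos {V E : Type} [Fintype V] [Fintype E] [DecidableEq V]
    (G : Multidigraph V E) (c : E → ℕ)
    (hconn : MConnected G) (hbal : IsBalancedNat G c) (hpos : ∀ e, 0 < c e)
    (r : V) :
    0 < treeCountNat G c r := by
  obtain ⟨d, hd⟩ := G.exists_potential_of_reachIn (G.exists_reachIn_of_isBalancedNat hconn hbal hpos r)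
  obtain ⟨T, hT⟩ := G.exists_isOrientedSpanningTree_of_potential d hd
  refine sum_pos' (fun _ _ => Nat.zero_le _) ⟨T, mem_univ T, ?_⟩
  rw [if_pos hT]
  exact prod_pos fun e _ => hpos e
end
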